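/- arXiv:2112.08204 — 14 statements merged into one kernel-verified Lean document; each statement's English description precedes it below -/
import Mathlib

section
/- Suppose the two components of the spherically symmetric divergence (dilaton) constraint hold on I with E nonvanishing, namely A'/A − (rE)'/(rE) = 2B²/(r(B²+r²S²)) and A'/A + 2ρ'/ρ + (B²+r²S²)'/(B²+r²S²) = −2rS²/(B²+r²S²) on I. Then the function r ↦ r³·ρ(r)²·(B(r)²+r²S(r)²)·E(r) is constant on I. -/
open Real Filter Topology Set

/-!
Subtracting the first constraint from the second eliminates `A'/A`, and since
`2B²/(rW) + 2rS²/W = 2/r` for `W = B² + r²S²`, what remains says that the logarithmic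
derivative of `r² · ρ² · W · (rE)` vanishes. That product is the claimed first integral.
-/

theorem hasDerivAt_sq_mul_sq_mul_mul_eq_zero {ρ W F : ℝ → ℝ} {x ρ' W' F' : ℝ}
    (hρ : HasDerivAt ρ ρ' x) (hW : HasDerivAt W W' x) (hF : HasDerivAt F F' x)
    (hx : x ≠ 0) (hρ0 : ρ x ≠ 0) (hW0 : W x ≠ 0) (hF0 : F x ≠ 0)
    (hlog : 2 / x + 2 * ρ' / ρ x + W' / W x + F' / F x = 0) :
    HasDerivAt (fun s => s ^ 2 * ρ s ^ 2 * W s * F s) 0 x := by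
  have hprod := ((((hasDerivAt_id x).fun_pow 2).fun_mul (hρ.fun_pow 2)).fun_mul hW).fun_mul hF
  refine hprod.congr_deriv ?_
  field_simp at hlog
  simp only [id, Nat.cast_ofNat]
  linear_combination x * ρ x * hlog

theorem dilaton_constraint_first_integral_general
    (a b : ℝ) (ha : 0 ≤ a)
    (A B ρ E S : ℝ → ℝ)
    (hB : ∀ r ∈ Ioo a b, DifferentiableAt ℝ B r)
    (hρ : ∀ r ∈ Ioo a b, DifferentiableAt ℝ ρ r)
    (hE : ∀ r ∈ Ioo a b, DifferentiableAt ℝ E r)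
    (hS : ∀ r ∈ Ioo a b, DifferentiableAt ℝ S r)
    (hρpos : ∀ r ∈ Ioo a b, 0 < ρ r)
    (hEne : ∀ r ∈ Ioo a b, E r ≠ 0)
    (hBS : ∀ r ∈ Ioo a b, 0 < B r ^ 2 + r ^ 2 * S r ^ 2)
    (hconstr1 : ∀ r ∈ Ioo a b,
      deriv A r / A r - deriv (fun s => s * E s) r / (r * E r)
        = 2 * B r ^ 2 / (r * (B r ^ 2 + r ^ 2 * S r ^ 2)))
    (hconstr2 : ∀ r ∈ Ioo a b,
      deriv A r / A r + 2 * deriv ρ r / ρ r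
          + deriv (fun s => B s ^ 2 + s ^ 2 * S s ^ 2) r / (B r ^ 2 + r ^ 2 * S r ^ 2)
        = -(2 * r * S r ^ 2) / (B r ^ 2 + r ^ 2 * S r ^ 2)) :
    ∃ c : ℝ, ∀ r ∈ Ioo a b,
      r ^ 3 * ρ r ^ 2 * (B r ^ 2 + r ^ 2 * S r ^ 2) * E r = c := by
  set W : ℝ → ℝ := fun s => B s ^ 2 + s ^ 2 * S s ^ 2
  have hderiv : ∀ r ∈ Ioo a b,
      HasDerivAt (fun s => s ^ 2 * ρ s ^ 2 * W s * (s * E s)) 0 r := by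
    intro r hr
    have hr0 : r ≠ 0 := (ha.trans_lt hr.1).ne'
    have hW0 : W r ≠ 0 := (hBS r hr).ne'
    have hWdiff : DifferentiableAt ℝ W r := by
      have := hB r hr; have := hS r hr; fun_prop
    have hFdiff : DifferentiableAt ℝ (fun s => s * E s) r := by
      have := hE r hr; fun_prop
    have hsum : -(2 * r * S r ^ 2) / W r - 2 * B r ^ 2 / (r * W r) = -(2 / r) := by
      field_simp; ring
    refine hasDerivAt_sq_mul_sq_mul_mul_eq_zero (hρ r hr).hasDerivAt hWdiff.hasDerivAt
      hFdiff.hasDerivAt hr0 (hρpos r hr).ne' hW0 (mul_ne_zero hr0 (hEne r hr)) ?_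
    linarith [hconstr1 r hr, hconstr2 r hr]
  obtain ⟨c, hc⟩ := isOpen_Ioo.exists_is_const_of_deriv_eq_zero isPreconnected_Ioo
    (fun r hr => (hderiv r hr).differentiableAt.differentiableWithinAt)
    (fun r hr => (hderiv r hr).deriv)
  exact ⟨c, fun r hr => by rw [← hc r hr]; ring⟩

/-- On an open interval `I = (a,b) ⊆ (0,∞)`, if the two components of the
spherically symmetric divergence (dilaton) constraint hold with `E` nonvanishing, namely
`A'/A − (rE)'/(rE) = 2B²/(r(B²+r²S²))` and
`A'/A + 2ρ'/ρ + (B²+r²S²)'/(B²+r²S²) = −2rS²/(B²+r²S²)`,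
then `r ↦ r³·ρ(r)²·(B(r)²+r²S(r)²)·E(r)` is constant on `I`. -/
theorem dilaton_constraint_first_integral
    (a b : ℝ) (ha : 0 ≤ a)
    (A B ρ E S : ℝ → ℝ)
    (hA : ∀ r ∈ Ioo a b, DifferentiableAt ℝ A r)
    (hB : ∀ r ∈ Ioo a b, DifferentiableAt ℝ B r)
    (hρ : ∀ r ∈ Ioo a b, DifferentiableAt ℝ ρ r)
    (hE : ∀ r ∈ Ioo a b, DifferentiableAt ℝ E r)
    (hS : ∀ r ∈ Ioo a b, DifferentiableAt ℝ S r)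
    (hApos : ∀ r ∈ Ioo a b, 0 < A r)
    (hBpos : ∀ r ∈ Ioo a b, 0 < B r)
    (hρpos : ∀ r ∈ Ioo a b, 0 < ρ r)
    (hEne : ∀ r ∈ Ioo a b, E r ≠ 0)
    (hBS : ∀ r ∈ Ioo a b, 0 < B r ^ 2 + r ^ 2 * S r ^ 2)
    (hconstr1 : ∀ r ∈ Ioo a b,
      deriv A r / A r - deriv (fun s => s * E s) r / (r * E r)
        = 2 * B r ^ 2 / (r * (B r ^ 2 + r ^ 2 * S r ^ 2)))
    (hconstr2 : ∀ r ∈ Ioo a b,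
      deriv A r / A r + 2 * deriv ρ r / ρ r
          + deriv (fun s => B s ^ 2 + s ^ 2 * S s ^ 2) r / (B r ^ 2 + r ^ 2 * S r ^ 2)
        = -(2 * r * S r ^ 2) / (B r ^ 2 + r ^ 2 * S r ^ 2)) :
    ∃ c : ℝ, ∀ r ∈ Ioo a b,
      r ^ 3 * ρ r ^ 2 * (B r ^ 2 + r ^ 2 * S r ^ 2) * E r = c :=
  dilaton_constraint_first_integral_general a b ha A B ρ E S hB hρ hE hS hρpos hEne hBS hconstr1
    hconstr2
end

section
/- Suppose the two components of the spherically symmetric divergence (dilaton) constraint hold on I with E nonvanishing, namely A'/A − (rE)'/(rE) = 2B²/(r(B²+r²S²)) and A'/A + 2ρ'/ρ + (B²+r²S²)'/(B²+r²S²) = −2rS²/(B²+r²S²) on I, and let c_e denote the constant value of r³ρ²(B²+r²S²)E. Then for all r ∈ I: B(r)² = (c_e/(2r²ρ(r)²E(r)))·(A'/A − (rE)'/(rE)) and S(r)² = −(c_e/(2r⁴ρ(r)²E(r)))·(A'/A − (r³E)'/(r³E)). -/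
open Set

/-!
The first constraint says exactly that `A'/A − (rE)'/(rE) = 2B²/(rX)` with `X = B² + r²S²`, and
`c_e/(2r²ρ²E) = rX/2`, so the formula for `B²` is that constraint solved for `B²`. Since
`(r³E)'/(r³E) = (rE)'/(rE) + 2/r`, the bracket in the formula for `S²` is `2B²/(rX) − 2/r`, and
`−(rX/(2r²))·(2B²/(rX) − 2/r) = (X − B²)/r² = S²`.
-/

theorem logDeriv_pow_mul {𝕜 : Type*} [NontriviallyNormedField 𝕜] {f : 𝕜 → 𝕜} {x : 𝕜}
    (n : ℕ) (hx : x ≠ 0) (hfx : f x ≠ 0) (hf : DifferentiableAt 𝕜 f x) :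
    logDeriv (fun z => z ^ n * f z) x = n / x + logDeriv f x := by
  rw [logDeriv_mul (f := (· ^ n)) x (pow_ne_zero n hx) hfx (differentiableAt_pow n) hf,
    logDeriv_pow]

theorem dilaton_constraint_B_S_formulas_general
    (a b : ℝ) (ha : 0 ≤ a)
    (A B ρ E S : ℝ → ℝ) (c_e : ℝ)
    (hE : ∀ r ∈ Ioo a b, DifferentiableAt ℝ E r)
    (hρpos : ∀ r ∈ Ioo a b, 0 < ρ r)
    (hEne : ∀ r ∈ Ioo a b, E r ≠ 0)
    (hBS : ∀ r ∈ Ioo a b, 0 < B r ^ 2 + r ^ 2 * S r ^ 2)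
    (hconstr1 : ∀ r ∈ Ioo a b,
      deriv A r / A r - deriv (fun s => s * E s) r / (r * E r)
        = 2 * B r ^ 2 / (r * (B r ^ 2 + r ^ 2 * S r ^ 2)))
    (hce : ∀ r ∈ Ioo a b,
      r ^ 3 * ρ r ^ 2 * (B r ^ 2 + r ^ 2 * S r ^ 2) * E r = c_e) :
    ∀ r ∈ Ioo a b,
      B r ^ 2 = c_e / (2 * r ^ 2 * ρ r ^ 2 * E r)
          * (deriv A r / A r - deriv (fun s => s * E s) r / (r * E r)) ∧
      S r ^ 2 = -(c_e / (2 * r ^ 4 * ρ r ^ 2 * E r))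
          * (deriv A r / A r - deriv (fun s => s ^ 3 * E s) r / (r ^ 3 * E r)) := by
  intro r hr
  have hr0 : r ≠ 0 := (ha.trans_lt hr.1).ne'
  have hρ0 : ρ r ≠ 0 := (hρpos r hr).ne'
  have hE0 := hEne r hr
  have hX0 := (hBS r hr).ne'
  have hlog1 : deriv (fun s => s * E s) r / (r * E r) = 1 / r + logDeriv E r := by
    simpa [logDeriv_apply] using logDeriv_pow_mul 1 hr0 hE0 (hE r hr)
  have hlog3 : deriv (fun s => s ^ 3 * E s) r / (r ^ 3 * E r) = 3 / r + logDeriv E r := by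
    simpa [logDeriv_apply] using logDeriv_pow_mul 3 hr0 hE0 (hE r hr)
  have hconstr3 : deriv A r / A r - deriv (fun s => s ^ 3 * E s) r / (r ^ 3 * E r)
      = 2 * B r ^ 2 / (r * (B r ^ 2 + r ^ 2 * S r ^ 2)) - 2 / r := by
    linear_combination hconstr1 r hr + hlog1 - hlog3
  rw [hconstr1 r hr, hconstr3, ← hce r hr]
  set X := B r ^ 2 + r ^ 2 * S r ^ 2 with hX
  constructor
  · field_simp
  · field_simp
    rw [hX]
    ring

/-- On an open interval `I = (a,b) ⊆ (0,∞)`, assume the two components of the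
spherically symmetric divergence (dilaton) constraint with `E ≠ 0`, and let `c_e` be the constant
value of `r³ρ²(B²+r²S²)E`. Then
`B² = (c_e/(2r²ρ²E))·(A'/A − (rE)'/(rE))` and
`S² = −(c_e/(2r⁴ρ²E))·(A'/A − (r³E)'/(r³E))`. -/
theorem dilaton_constraint_B_S_formulas
    (a b : ℝ) (ha : 0 ≤ a)
    (A B ρ E S : ℝ → ℝ) (c_e : ℝ)
    (hA : ∀ r ∈ Ioo a b, DifferentiableAt ℝ A r)
    (hB : ∀ r ∈ Ioo a b, DifferentiableAt ℝ B r)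
    (hρ : ∀ r ∈ Ioo a b, DifferentiableAt ℝ ρ r)
    (hE : ∀ r ∈ Ioo a b, DifferentiableAt ℝ E r)
    (hS : ∀ r ∈ Ioo a b, DifferentiableAt ℝ S r)
    (hApos : ∀ r ∈ Ioo a b, 0 < A r)
    (hBpos : ∀ r ∈ Ioo a b, 0 < B r)
    (hρpos : ∀ r ∈ Ioo a b, 0 < ρ r)
    (hEne : ∀ r ∈ Ioo a b, E r ≠ 0)
    (hBS : ∀ r ∈ Ioo a b, 0 < B r ^ 2 + r ^ 2 * S r ^ 2)
    (hconstr1 : ∀ r ∈ Ioo a b,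
      deriv A r / A r - deriv (fun s => s * E s) r / (r * E r)
        = 2 * B r ^ 2 / (r * (B r ^ 2 + r ^ 2 * S r ^ 2)))
    (hconstr2 : ∀ r ∈ Ioo a b,
      deriv A r / A r + 2 * deriv ρ r / ρ r
          + deriv (fun s => B s ^ 2 + s ^ 2 * S s ^ 2) r / (B r ^ 2 + r ^ 2 * S r ^ 2)
        = -(2 * r * S r ^ 2) / (B r ^ 2 + r ^ 2 * S r ^ 2))
    (hce : ∀ r ∈ Ioo a b,
      r ^ 3 * ρ r ^ 2 * (B r ^ 2 + r ^ 2 * S r ^ 2) * E r = c_e) :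
    ∀ r ∈ Ioo a b,
      B r ^ 2 = c_e / (2 * r ^ 2 * ρ r ^ 2 * E r)
          * (deriv A r / A r - deriv (fun s => s * E s) r / (r * E r)) ∧
      S r ^ 2 = -(c_e / (2 * r ^ 4 * ρ r ^ 2 * E r))
          * (deriv A r / A r - deriv (fun s => s ^ 3 * E s) r / (r ^ 3 * E r)) :=
  dilaton_constraint_B_S_formulas_general a b ha A B ρ E S c_e hE hρpos hEne hBS hconstr1 hce
end

section
/- Assume the reduced spherically symmetric vacuum system (i)–(iv) holds on I. Then the function r ↦ (E(r)ρ(r)²/(r·B(r)²))·(A(r)²/(r²E(r)²) − 1) is constant on I. -/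
/-! Writing `M = rE` and `N = rB`, the first integral is `F = ρ² (A² − M²) / (N² M)`, and its
logarithmic derivative is `2ρ'/ρ − 2N'/N − M'/M + (A² − M²)'/(A² − M²)`. With `k = c₀ r B E` and
`u = (2/c_e) r² B² E ρ²`, equations (i)–(iv) give the rates `A'/A = k`, `M'/M = k − u`,
`N'/N = −A²/(r(M² − A²))` and `ρ'/ρ = −(A²/(M² − A²))(1/r − u) − (k − u)/2`; the `1/r` terms
cancel and what is left is `2A²(k − u − M'/M)/(M² − A²) = 0`. -/

open Real Filter Topology Set

/-- The reduced spherically symmetric vacuum system (i)–(iv) on the open interval `(a,b) ⊆ (0,∞)`,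
for positive differentiable `A, B, E, ρ` with constants `c₀`, `c_e > 0` and `r²E² ≠ A²`. -/
def ReducedVacuumSystem (a b : ℝ) (A B E ρ : ℝ → ℝ) (c₀ c_e : ℝ) : Prop :=
  0 ≤ a ∧ 0 < c_e ∧
  (∀ r ∈ Set.Ioo a b, DifferentiableAt ℝ A r) ∧
  (∀ r ∈ Set.Ioo a b, DifferentiableAt ℝ B r) ∧
  (∀ r ∈ Set.Ioo a b, DifferentiableAt ℝ E r) ∧
  (∀ r ∈ Set.Ioo a b, DifferentiableAt ℝ ρ r) ∧
  (∀ r ∈ Set.Ioo a b, 0 < A r) ∧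
  (∀ r ∈ Set.Ioo a b, 0 < B r) ∧
  (∀ r ∈ Set.Ioo a b, 0 < E r) ∧
  (∀ r ∈ Set.Ioo a b, 0 < ρ r) ∧
  (∀ r ∈ Set.Ioo a b, r ^ 2 * E r ^ 2 ≠ A r ^ 2) ∧
  -- (i)  A'/A = c₀ r B E
  (∀ r ∈ Set.Ioo a b, deriv A r / A r = c₀ * r * B r * E r) ∧
  -- (ii) (rE)'/(rE) = −(2/c_e) r² B² E ρ² + c₀ r B E
  (∀ r ∈ Set.Ioo a b, deriv (fun s => s * E s) r / (r * E r)
      = -(2 / c_e) * r ^ 2 * B r ^ 2 * E r * ρ r ^ 2 + c₀ * r * B r * E r) ∧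
  -- (iii) (rB)'/(rB) = −(1/r)·A²/(r²E² − A²)
  (∀ r ∈ Set.Ioo a b, deriv (fun s => s * B s) r / (r * B r)
      = -(1 / r) * A r ^ 2 / (r ^ 2 * E r ^ 2 - A r ^ 2)) ∧
  -- (iv) ρ'/ρ = −(A²/(r²E² − A²))·(1/r − (2/c_e) r² B² E ρ²) − (1/2)·(rE)'/(rE)
  (∀ r ∈ Set.Ioo a b, deriv ρ r / ρ r
      = -(A r ^ 2 / (r ^ 2 * E r ^ 2 - A r ^ 2))
          * (1 / r - (2 / c_e) * r ^ 2 * B r ^ 2 * E r * ρ r ^ 2)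
        - (1 / 2) * (deriv (fun s => s * E s) r / (r * E r)))

theorem hasDerivAt_of_deriv_div_eq {f : ℝ → ℝ} {x c : ℝ} (hf : DifferentiableAt ℝ f x)
    (h0 : f x ≠ 0) (h : deriv f x / f x = c) : HasDerivAt f (c * f x) x := by
  rw [← h, div_mul_cancel₀ _ h0]
  exact hf.hasDerivAt

noncomputable def firstIntegral (A M N ρ : ℝ → ℝ) (r : ℝ) : ℝ :=
  ρ r ^ 2 * (A r ^ 2 - M r ^ 2) / (N r ^ 2 * M r)

section FirstIntegral

variable {A M N ρ : ℝ → ℝ} {r : ℝ}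

theorem hasDerivAt_firstIntegral {α μ ν σ : ℝ}
    (hA : HasDerivAt A (α * A r) r) (hM : HasDerivAt M (μ * M r) r)
    (hN : HasDerivAt N (ν * N r) r) (hρ : HasDerivAt ρ (σ * ρ r) r)
    (hM0 : M r ≠ 0) (hN0 : N r ≠ 0) :
    HasDerivAt (firstIntegral A M N ρ)
      (firstIntegral A M N ρ r * (2 * σ - 2 * ν - μ)
        + 2 * ρ r ^ 2 * (α * A r ^ 2 - μ * M r ^ 2) / (N r ^ 2 * M r)) r := by
  have h := ((hρ.pow 2).mul ((hA.pow 2).sub (hM.pow 2))).div ((hN.pow 2).mul hM)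
    (mul_ne_zero (pow_ne_zero 2 hN0) hM0)
  refine h.congr_deriv ?_
  simp only [firstIntegral, Pi.mul_apply, Pi.sub_apply, Pi.pow_apply]
  field_simp
  ring

theorem hasDerivAt_firstIntegral_eq_zero {k u : ℝ} (hM0 : M r ≠ 0) (hN0 : N r ≠ 0)
    (hD : M r ^ 2 ≠ A r ^ 2)
    (hA : HasDerivAt A (k * A r) r) (hM : HasDerivAt M ((k - u) * M r) r)
    (hN : HasDerivAt N (-(1 / r) * A r ^ 2 / (M r ^ 2 - A r ^ 2) * N r) r)
    (hρ : HasDerivAt ρ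
      ((-(A r ^ 2 / (M r ^ 2 - A r ^ 2)) * (1 / r - u) - 1 / 2 * (k - u)) * ρ r) r) :
    HasDerivAt (firstIntegral A M N ρ) 0 r := by
  refine (hasDerivAt_firstIntegral hA hM hN hρ hM0 hN0).congr_deriv ?_
  have hD' : M r ^ 2 - A r ^ 2 ≠ 0 := sub_ne_zero.mpr hD
  unfold firstIntegral
  field_simp
  ring

end FirstIntegral

theorem firstIntegral_id_mul {A B E ρ : ℝ → ℝ} {r : ℝ} (hr : r ≠ 0) (hB : B r ≠ 0)
    (hE : E r ≠ 0) :
    firstIntegral A (fun s => s * E s) (fun s => s * B s) ρ r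
      = E r * ρ r ^ 2 / (r * B r ^ 2) * (A r ^ 2 / (r ^ 2 * E r ^ 2) - 1) := by
  simp only [firstIntegral]
  field_simp

theorem ReducedVacuumSystem.hasDerivAt_firstIntegral {a b : ℝ} {A B E ρ : ℝ → ℝ} {c₀ c_e : ℝ}
    (hsys : ReducedVacuumSystem a b A B E ρ c₀ c_e) {r : ℝ} (hr : r ∈ Set.Ioo a b) :
    HasDerivAt (firstIntegral A (fun s => s * E s) (fun s => s * B s) ρ) 0 r := by
  obtain ⟨ha, -, hAd, hBd, hEd, hρd, hA, hB, hE, hρ, hne, hi, hii, hiii, hiv⟩ := hsys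
  have hr0 : r ≠ 0 := (ha.trans_lt hr.1).ne'
  have hM0 : r * E r ≠ 0 := mul_ne_zero hr0 (hE r hr).ne'
  have hN0 : r * B r ≠ 0 := mul_ne_zero hr0 (hB r hr).ne'
  have hM := hasDerivAt_of_deriv_div_eq
    (differentiableAt_fun_id.fun_mul (hEd r hr)) hM0 (hii r hr)
  have hN := hasDerivAt_of_deriv_div_eq
    (differentiableAt_fun_id.fun_mul (hBd r hr)) hN0 (hiii r hr)
  have hρ' := hasDerivAt_of_deriv_div_eq (hρd r hr) (hρ r hr).ne' (hiv r hr)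
  rw [hii r hr] at hρ'
  refine hasDerivAt_firstIntegral_eq_zero (k := c₀ * r * B r * E r)
    (u := 2 / c_e * r ^ 2 * B r ^ 2 * E r * ρ r ^ 2) hM0 hN0 ?_
    (hasDerivAt_of_deriv_div_eq (hAd r hr) (hA r hr).ne' (hi r hr))
    (hM.congr_deriv (by ring)) (hN.congr_deriv (by ring)) (hρ'.congr_deriv (by ring))
  simpa only [mul_pow] using hne r hr

/-- If the reduced spherically symmetric vacuum system (i)–(iv) holds on
`I = (a,b)`, then `r ↦ (Eρ²/(rB²))·(A²/(r²E²) − 1)` is constant on `I`. -/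
theorem first_integral_c1
    (a b : ℝ) (A B E ρ : ℝ → ℝ) (c₀ c_e : ℝ)
    (hsys : ReducedVacuumSystem a b A B E ρ c₀ c_e) :
    ∃ c : ℝ, ∀ r ∈ Set.Ioo a b,
      E r * ρ r ^ 2 / (r * B r ^ 2) * (A r ^ 2 / (r ^ 2 * E r ^ 2) - 1) = c := by
  obtain ⟨c, hc⟩ := isOpen_Ioo.exists_is_const_of_deriv_eq_zero isPreconnected_Ioo
    (fun r hr => (hsys.hasDerivAt_firstIntegral hr).differentiableAt.differentiableWithinAt)
    (fun r hr => (hsys.hasDerivAt_firstIntegral hr).deriv)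
  obtain ⟨ha, -, -, -, -, -, -, hB, hE, -⟩ := hsys
  refine ⟨c, fun r hr => ?_⟩
  rw [← firstIntegral_id_mul (ha.trans_lt hr.1).ne' (hB r hr).ne' (hE r hr).ne', hc r hr]
end

section
/- Assume the reduced spherically symmetric vacuum system (i)–(iv) holds on I, and let c₁ ≠ 0 denote the constant value of (Eρ²/(rB²))·(A²/(r²E²) − 1). Then the function r ↦ (c₁/c_e)·(c_e r B(r)²/(E(r)ρ(r)²) − r⁴B(r)⁴) is constant on I; denoting its value by c₃, one has E(r)ρ(r)² = c₁ c_e r B(r)² / (c₁ r⁴ B(r)⁴ + c₃ c_e) for all r ∈ I. -/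
/-!
Put `u = rB`, `v = rE` and `k = A²/(r²E² − A²)`. Equation (iii) says `u'/u = −k/r`, and combined
with (iv) it gives `2u'/u − v'/v − 2ρ'/ρ = −(4/c_e) k r²B²Eρ²`. Since `c_e rB²/(Eρ²) = c_e u²/(vρ²)`
and `r⁴B⁴ = u⁴`, both terms of `c_e rB²/(Eρ²) − r⁴B⁴` therefore have derivative `−4k r³B⁴`, so this
quantity is constant on the interval. Solving its definition for `Eρ²` gives the formula, the
denominator being `c₁ c_e rB²/(Eρ²) ≠ 0`.
-/

open Real Filter Topology Set

section LogDeriv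

variable {𝕜 : Type*} [NontriviallyNormedField 𝕜]

theorem hasDerivAt_mul_logDeriv {f : 𝕜 → 𝕜} {x : 𝕜} (hf : DifferentiableAt 𝕜 f x)
    (hfx : f x ≠ 0) : HasDerivAt f (f x * logDeriv f x) x := by
  rw [logDeriv_apply, mul_div_cancel₀ _ hfx]
  exact hf.hasDerivAt

theorem logDeriv_sq_div_mul_sq {u v w : 𝕜 → 𝕜} {x : 𝕜} (hu : DifferentiableAt 𝕜 u x)
    (hv : DifferentiableAt 𝕜 v x) (hw : DifferentiableAt 𝕜 w x)
    (hux : u x ≠ 0) (hvx : v x ≠ 0) (hwx : w x ≠ 0) :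
    logDeriv (fun s => u s ^ 2 / (v s * w s ^ 2)) x
      = 2 * logDeriv u x - logDeriv v x - 2 * logDeriv w x := by
  rw [logDeriv_div (f := fun s => u s ^ 2) (g := fun s => v s * w s ^ 2) x (pow_ne_zero 2 hux)
      (mul_ne_zero hvx (pow_ne_zero 2 hwx)) (hu.pow 2) (hv.mul (hw.pow 2)),
    logDeriv_mul (g := fun s => w s ^ 2) x hvx (pow_ne_zero 2 hwx) hv (hw.pow 2),
    logDeriv_fun_pow hu, logDeriv_fun_pow hw]
  push_cast
  ring

end LogDeriv

noncomputable def vacuumInvariant (c_e : ℝ) (B E ρ : ℝ → ℝ) (r : ℝ) : ℝ :=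
  c_e * r * B r ^ 2 / (E r * ρ r ^ 2) - r ^ 4 * B r ^ 4

theorem vacuumInvariant_eq (c_e : ℝ) (B E ρ : ℝ → ℝ) :
    vacuumInvariant c_e B E ρ
      = fun s => c_e * ((s * B s) ^ 2 / ((s * E s) * ρ s ^ 2)) - (s * B s) ^ 4 := by
  funext s
  rcases eq_or_ne s 0 with rfl | hs
  · simp [vacuumInvariant]
  · rw [vacuumInvariant, mul_pow, mul_pow, sq s, mul_assoc s s, mul_assoc s (E s),
      mul_div_mul_left _ _ hs]
    ring

namespace ReducedVacuumSystem

variable {a b : ℝ} {A B E ρ : ℝ → ℝ} {c₀ c_e : ℝ}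

-- The `(rE)'/(rE)` terms of (iv) cancel against the middle term.
theorem two_logDeriv_sub_logDeriv_sub_two_logDeriv
    (hsys : ReducedVacuumSystem a b A B E ρ c₀ c_e) {r : ℝ} (hr : r ∈ Ioo a b) :
    2 * logDeriv (fun s => s * B s) r - logDeriv (fun s => s * E s) r - 2 * logDeriv ρ r
      = -(4 / c_e) * (A r ^ 2 / (r ^ 2 * E r ^ 2 - A r ^ 2)) * r ^ 2 * B r ^ 2 * E r * ρ r ^ 2 := by
  obtain ⟨-, -, -, -, -, -, -, -, -, -, -, -, -, hrB, hρ⟩ := hsys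
  simp only [logDeriv_apply, hrB r hr, hρ r hr]
  ring

theorem hasDerivAt_vacuumInvariant (hsys : ReducedVacuumSystem a b A B E ρ c₀ c_e) {r : ℝ}
    (hr : r ∈ Ioo a b) : HasDerivAt (vacuumInvariant c_e B E ρ) 0 r := by
  have hcomb := hsys.two_logDeriv_sub_logDeriv_sub_two_logDeriv hr
  obtain ⟨ha, hce, -, hdB, hdE, hdρ, -, hB, hE, hρ, -, -, -, hrB, -⟩ := hsys
  have hr0 : r ≠ 0 := (ha.trans_lt hr.1).ne'
  have hu : DifferentiableAt ℝ (fun s => s * B s) r := differentiableAt_id.mul (hdB r hr)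
  have hv : DifferentiableAt ℝ (fun s => s * E s) r := differentiableAt_id.mul (hdE r hr)
  have hux : r * B r ≠ 0 := mul_ne_zero hr0 (hB r hr).ne'
  have hEx : E r ≠ 0 := (hE r hr).ne'
  have hvx : r * E r ≠ 0 := mul_ne_zero hr0 hEx
  have hρx : ρ r ≠ 0 := (hρ r hr).ne'
  have hQ := hasDerivAt_mul_logDeriv (f := fun s => (s * B s) ^ 2 / ((s * E s) * ρ s ^ 2))
    ((hu.pow 2).div (hv.mul ((hdρ r hr).pow 2)) (mul_ne_zero hvx (pow_ne_zero 2 hρx)))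
    (div_ne_zero (pow_ne_zero 2 hux) (mul_ne_zero hvx (pow_ne_zero 2 hρx)))
  have hU := hasDerivAt_mul_logDeriv (f := fun s => (s * B s) ^ 4) (hu.pow 4) (pow_ne_zero 4 hux)
  rw [logDeriv_sq_div_mul_sq hu hv (hdρ r hr) hux hvx hρx, hcomb] at hQ
  rw [logDeriv_fun_pow hu, logDeriv_apply, hrB r hr] at hU
  rw [vacuumInvariant_eq]
  refine ((hQ.const_mul c_e).sub hU).congr_deriv ?_
  field_simp
  ring

theorem exists_forall_vacuumInvariant_eq (hsys : ReducedVacuumSystem a b A B E ρ c₀ c_e) :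
    ∃ K, ∀ r ∈ Ioo a b, vacuumInvariant c_e B E ρ r = K :=
  isOpen_Ioo.exists_is_const_of_deriv_eq_zero isPreconnected_Ioo
    (fun _ hr => (hsys.hasDerivAt_vacuumInvariant hr).differentiableAt.differentiableWithinAt)
    (fun _ hr => (hsys.hasDerivAt_vacuumInvariant hr).deriv)

theorem E_mul_ρ_sq_eq (hsys : ReducedVacuumSystem a b A B E ρ c₀ c_e) {c₁ : ℝ} (hc₁ : c₁ ≠ 0)
    {r : ℝ} (hr : r ∈ Ioo a b) :
    E r * ρ r ^ 2 = c₁ * c_e * r * B r ^ 2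
      / (c₁ * r ^ 4 * B r ^ 4 + c₁ / c_e * vacuumInvariant c_e B E ρ r * c_e) := by
  obtain ⟨ha, hce, -, -, -, -, -, hB, hE, hρ, -⟩ := hsys
  have hr0 : r ≠ 0 := (ha.trans_lt hr.1).ne'
  have hBr : B r ≠ 0 := (hB r hr).ne'
  have hEr : E r ≠ 0 := (hE r hr).ne'
  have hρr : ρ r ≠ 0 := (hρ r hr).ne'
  have hden : c₁ * r ^ 4 * B r ^ 4 + c₁ / c_e * vacuumInvariant c_e B E ρ r * c_e
      = c₁ * c_e * r * B r ^ 2 / (E r * ρ r ^ 2) := by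
    rw [vacuumInvariant]
    field_simp
    ring
  rw [hden, div_div_cancel₀ (by positivity)]

end ReducedVacuumSystem

theorem Erho2_algebraic_formula_general
    (a b : ℝ) (A B E ρ : ℝ → ℝ) (c₀ c_e c₁ : ℝ)
    (hsys : ReducedVacuumSystem a b A B E ρ c₀ c_e)
    (hc₁ne : c₁ ≠ 0) :
    ∃ c₃ : ℝ,
      (∀ r ∈ Set.Ioo a b,
        c₁ / c_e * (c_e * r * B r ^ 2 / (E r * ρ r ^ 2) - r ^ 4 * B r ^ 4) = c₃) ∧
      (∀ r ∈ Set.Ioo a b,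
        E r * ρ r ^ 2 = c₁ * c_e * r * B r ^ 2 / (c₁ * r ^ 4 * B r ^ 4 + c₃ * c_e)) := by
  obtain ⟨K, hK⟩ := hsys.exists_forall_vacuumInvariant_eq
  refine ⟨c₁ / c_e * K, fun r hr => congrArg (c₁ / c_e * ·) (hK r hr), fun r hr => ?_⟩
  rw [← hK r hr]
  exact hsys.E_mul_ρ_sq_eq hc₁ne hr

/-- If the reduced spherically symmetric vacuum system (i)–(iv) holds on
`I = (a,b)` and `c₁ ≠ 0` is the constant value of `(Eρ²/(rB²))·(A²/(r²E²) − 1)`, then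
`r ↦ (c₁/c_e)·(c_e r B²/(Eρ²) − r⁴B⁴)` is constant on `I`; denoting its value by `c₃`,
one has `Eρ² = c₁ c_e r B² / (c₁ r⁴ B⁴ + c₃ c_e)` on `I`. -/
theorem Erho2_algebraic_formula
    (a b : ℝ) (A B E ρ : ℝ → ℝ) (c₀ c_e c₁ : ℝ)
    (hsys : ReducedVacuumSystem a b A B E ρ c₀ c_e)
    (hc₁ : ∀ r ∈ Set.Ioo a b,
      E r * ρ r ^ 2 / (r * B r ^ 2) * (A r ^ 2 / (r ^ 2 * E r ^ 2) - 1) = c₁)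
    (hc₁ne : c₁ ≠ 0) :
    ∃ c₃ : ℝ,
      (∀ r ∈ Set.Ioo a b,
        c₁ / c_e * (c_e * r * B r ^ 2 / (E r * ρ r ^ 2) - r ^ 4 * B r ^ 4) = c₃) ∧
      (∀ r ∈ Set.Ioo a b,
        E r * ρ r ^ 2 = c₁ * c_e * r * B r ^ 2 / (c₁ * r ^ 4 * B r ^ 4 + c₃ * c_e)) :=
  Erho2_algebraic_formula_general a b A B E ρ c₀ c_e c₁ hsys hc₁ne
end

section
/- The improper integral ∫₀^∞ dt/√(1+t⁴) converges and equals Γ(1/4)·Γ(5/4)/√π, where Γ is the Gamma function. -/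
open Real MeasureTheory Set

/-!
Substituting `t = u ^ (1/4)` and then `u = x / (1 - x)` turns the integral into
`B(1/4, 1/4) / 4 = Γ(1/4)² / (4 Γ(1/2))`; conclude with `Γ(1/2) = √π` and `Γ(5/4) = Γ(1/4) / 4`.
More generally `∫₀^∞ (1 + t^p)^(-s) dt = Γ(1/p) Γ(s - 1/p) / (p Γ(s))`.
-/

section BetaIntegral

variable {a b : ℝ}

lemma ofReal_rpow_mul_one_sub_rpow {x : ℝ} (hx : x ∈ Icc (0 : ℝ) 1) :
    ((x ^ (a - 1) * (1 - x) ^ (b - 1) : ℝ) : ℂ) =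
      (x : ℂ) ^ ((a : ℂ) - 1) * (1 - (x : ℂ)) ^ ((b : ℂ) - 1) := by
  rw [Complex.ofReal_mul, Complex.ofReal_cpow hx.1, Complex.ofReal_cpow (sub_nonneg.2 hx.2)]
  push_cast
  rfl

lemma integrableOn_Ioo_rpow_mul_one_sub_rpow (ha : 0 < a) (hb : 0 < b) :
    IntegrableOn (fun x : ℝ => x ^ (a - 1) * (1 - x) ^ (b - 1)) (Ioo 0 1) := by
  have h : IntegrableOn (fun x : ℝ => ((x : ℂ) ^ ((a : ℂ) - 1) * (1 - (x : ℂ)) ^ ((b : ℂ) - 1)).re)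
      (Ioo 0 1) :=
    ((Complex.betaIntegral_convergent (u := a) (v := b) (by simpa) (by simpa)).1.mono_set
      Ioo_subset_Ioc_self).re
  refine h.congr_fun (fun x hx => ?_) measurableSet_Ioo
  simp only [← ofReal_rpow_mul_one_sub_rpow (Ioo_subset_Icc_self hx), Complex.ofReal_re]

lemma integral_Ioo_rpow_mul_one_sub_rpow (ha : 0 < a) (hb : 0 < b) :
    ∫ x in Ioo (0 : ℝ) 1, x ^ (a - 1) * (1 - x) ^ (b - 1) = Gamma a * Gamma b / Gamma (a + b) := by
  have hB : Complex.betaIntegral a b =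
      ((∫ x in Ioo (0 : ℝ) 1, x ^ (a - 1) * (1 - x) ^ (b - 1) : ℝ) : ℂ) := by
    rw [Complex.betaIntegral, intervalIntegral.integral_of_le zero_le_one,
      integral_Ioc_eq_integral_Ioo, ← integral_complex_ofReal]
    exact setIntegral_congr_fun measurableSet_Ioo fun x hx =>
      (ofReal_rpow_mul_one_sub_rpow (Ioo_subset_Icc_self hx)).symm
  have := ProbabilityTheory.beta_eq_betaIntegralReal a b ha hb
  rw [hB, Complex.ofReal_re] at this
  exact this.symm

lemma injOn_div_one_add : InjOn (fun u : ℝ => u / (1 + u)) (Ioi 0) := by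
  intro u (hu : 0 < u) v (hv : 0 < v) huv
  simp only at huv
  field_simp at huv
  linarith

lemma image_div_one_add_Ioi : (fun u : ℝ => u / (1 + u)) '' Ioi 0 = Ioo 0 1 := by
  ext x
  constructor
  · rintro ⟨u, hu : 0 < u, rfl⟩
    exact ⟨by positivity, (div_lt_one (by positivity)).2 (by linarith)⟩
  · rintro ⟨hx0, hx1⟩
    have h1x : 0 < 1 - x := by linarith
    refine ⟨x / (1 - x), div_pos hx0 h1x, ?_⟩
    field_simp
    ring

lemma hasDerivAt_div_one_add {u : ℝ} (hu : 1 + u ≠ 0) :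
    HasDerivAt (fun v : ℝ => v / (1 + v)) (1 / (1 + u) ^ 2) u := by
  have h : HasDerivAt (fun v : ℝ => v / (1 + v)) ((1 * (1 + u) - u * 1) / (1 + u) ^ 2) u :=
    (hasDerivAt_id' u).div ((hasDerivAt_id' u).const_add 1) hu
  convert h using 2
  ring

lemma abs_one_div_sq_mul_rpow_mul_one_sub_rpow_div_one_add {u : ℝ} (hu : 0 < u) :
    |1 / (1 + u) ^ 2| * ((u / (1 + u)) ^ (a - 1) * (1 - u / (1 + u)) ^ (b - 1)) =
      u ^ (a - 1) * (1 + u) ^ (-(a + b)) := by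
  have h1u : 0 < 1 + u := by linarith
  have hsub : 1 - u / (1 + u) = (1 + u)⁻¹ := by field_simp; ring
  have hsplit : (1 + u) ^ (a + b) = (1 + u) ^ (a - 1) * (1 + u) ^ (b - 1) * (1 + u) ^ 2 := by
    rw [← rpow_add h1u, ← rpow_natCast, ← rpow_add h1u]
    congr 1
    push_cast
    ring
  rw [hsub, div_rpow hu.le h1u.le, inv_rpow h1u.le, rpow_neg h1u.le, hsplit,
    abs_of_pos (by positivity)]
  field_simp

theorem integral_Ioi_rpow_mul_one_add_rpow (ha : 0 < a) (hb : 0 < b) :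
    IntegrableOn (fun u : ℝ => u ^ (a - 1) * (1 + u) ^ (-(a + b))) (Ioi 0) ∧
      ∫ u in Ioi (0 : ℝ), u ^ (a - 1) * (1 + u) ^ (-(a + b)) =
        Gamma a * Gamma b / Gamma (a + b) := by
  set f : ℝ → ℝ := fun x => x ^ (a - 1) * (1 - x) ^ (b - 1)
  have hderiv : ∀ u ∈ Ioi (0 : ℝ),
      HasDerivWithinAt (fun v : ℝ => v / (1 + v)) (1 / (1 + u) ^ 2) (Ioi 0) u :=
    fun u (hu : 0 < u) => (hasDerivAt_div_one_add (by positivity)).hasDerivWithinAt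
  have hpull : EqOn (fun u => |1 / (1 + u) ^ 2| • f (u / (1 + u)))
      (fun u => u ^ (a - 1) * (1 + u) ^ (-(a + b))) (Ioi 0) :=
    fun u hu => abs_one_div_sq_mul_rpow_mul_one_sub_rpow_div_one_add hu
  have hint := integrableOn_image_iff_integrableOn_abs_deriv_smul measurableSet_Ioi hderiv
    injOn_div_one_add f
  have hval := integral_image_eq_integral_abs_deriv_smul measurableSet_Ioi hderiv
    injOn_div_one_add f
  rw [image_div_one_add_Ioi] at hint hval
  refine ⟨(hint.1 (integrableOn_Ioo_rpow_mul_one_sub_rpow ha hb)).congr_fun hpull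
    measurableSet_Ioi, ?_⟩
  rw [← setIntegral_congr_fun measurableSet_Ioi hpull, ← hval,
    integral_Ioo_rpow_mul_one_sub_rpow ha hb]

end BetaIntegral

theorem integral_Ioi_one_add_rpow_rpow_neg {p s : ℝ} (hp : 0 < p) (hs : p⁻¹ < s) :
    IntegrableOn (fun t : ℝ => (1 + t ^ p) ^ (-s)) (Ioi 0) ∧
      ∫ t in Ioi (0 : ℝ), (1 + t ^ p) ^ (-s) = Gamma p⁻¹ * Gamma (s - p⁻¹) / (p * Gamma s) := by
  set g : ℝ → ℝ := fun t => (1 + t ^ p) ^ (-s)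
  have hpull : EqOn (fun u => u ^ (p⁻¹ - 1) • g (u ^ p⁻¹))
      (fun u => u ^ (p⁻¹ - 1) * (1 + u) ^ (-s)) (Ioi 0) := by
    intro u (hu : 0 < u)
    simp only [g, smul_eq_mul, rpow_inv_rpow hu.le hp.ne']
  obtain ⟨hint, hval⟩ := integral_Ioi_rpow_mul_one_add_rpow (inv_pos.2 hp) (sub_pos.2 hs)
  rw [add_sub_cancel] at hint hval
  refine ⟨(integrableOn_Ioi_comp_rpow_iff' g (inv_ne_zero hp.ne')).1
    (hint.congr_fun hpull.symm measurableSet_Ioi), ?_⟩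
  calc ∫ t in Ioi 0, g t = ∫ u in Ioi 0, p⁻¹ • (u ^ (p⁻¹ - 1) • g (u ^ p⁻¹)) := by
        simp_rw [← mul_smul]
        exact (integral_comp_rpow_Ioi_of_pos (inv_pos.2 hp)).symm
    _ = p⁻¹ * ∫ u in Ioi 0, u ^ (p⁻¹ - 1) * (1 + u) ^ (-s) := by
        rw [integral_smul, setIntegral_congr_fun measurableSet_Ioi hpull, smul_eq_mul]
    _ = Gamma p⁻¹ * Gamma (s - p⁻¹) / (p * Gamma s) := by
        rw [hval]
        field_simp

/-- The improper integral `∫₀^∞ dt/√(1+t⁴)` converges and equals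
`Γ(1/4)·Γ(5/4)/√π`. -/
theorem integral_one_div_sqrt_one_add_pow_four :
    IntegrableOn (fun t : ℝ => 1 / Real.sqrt (1 + t ^ 4)) (Ioi 0) ∧
    ∫ t in Ioi (0:ℝ), 1 / Real.sqrt (1 + t ^ 4)
      = Real.Gamma (1/4) * Real.Gamma (5/4) / Real.sqrt Real.pi := by
  have hf : (fun t : ℝ => 1 / √(1 + t ^ 4)) = fun t => (1 + t ^ (4 : ℝ)) ^ (-(1 / 2 : ℝ)) := by
    ext t
    have h4 : t ^ (4 : ℝ) = t ^ 4 := by exact_mod_cast rpow_natCast t 4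
    rw [h4, rpow_neg (by positivity), ← sqrt_eq_rpow, one_div]
  have hGamma : Gamma (5 / 4) = 4⁻¹ * Gamma 4⁻¹ := by
    rw [show (5 / 4 : ℝ) = 4⁻¹ + 1 by norm_num, Gamma_add_one (by norm_num)]
  obtain ⟨hint, hval⟩ := integral_Ioi_one_add_rpow_rpow_neg (p := 4) (s := 1 / 2)
    (by norm_num) (by norm_num)
  rw [hf]
  refine ⟨hint, hval.trans ?_⟩
  rw [show (1 / 2 - 4⁻¹ : ℝ) = 4⁻¹ by norm_num, Gamma_one_half_eq, hGamma]
  norm_num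
  ring
end

section
/- Let F(z) := ∫₀^z (1+t⁴)^{−1/2} dt and L := Γ(1/4)·Γ(5/4)/√π. Then lim_{z→∞} z·(L − F(z)) = 1, and more precisely lim_{z→∞} z⁵·(F(z) − L + 1/z) = 1/10; in particular F(z) = L − 1/z + O(z⁻⁵) as z → ∞. -/
/-!
The substitution `u = s⁴/(1+s⁴)` turns the Beta integral `B(1/4, 1/4) = Γ(1/4)²/√π` into
`4 ∫₀^∞ ds/√(1+s⁴)`, so `L = ∫₀^∞ dt/√(1+t⁴)` and `L - F(z)` is the tail `∫_z^∞ dt/√(1+t⁴)`.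
Writing the integrand as `t⁻² (1+t⁻⁴)^(-1/2)` and using the alternating Taylor bounds
`1 - x/2 ≤ (1+x)^(-1/2) ≤ 1 - x/2 + 3x²/8` (`x ≥ 0`) squeezes the tail between
`1/z - 1/(10z⁵)` and `1/z - 1/(10z⁵) + 1/(24z⁹)`. Hence `z⁵ (F(z) - L + 1/z) → 1/10`, and the
other two claims follow from this limit.
-/

open Real Filter Topology Asymptotics

/-- `F(z) = ∫₀^z dt/√(1+t⁴)`. -/
noncomputable def Fint (z : ℝ) : ℝ := ∫ t in (0:ℝ)..z, 1 / Real.sqrt (1 + t ^ 4)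

/-- `L = Γ(1/4)·Γ(5/4)/√π`, the value of the improper integral `∫₀^∞ dt/√(1+t⁴)`. -/
noncomputable def Lval : ℝ := Real.Gamma (1/4) * Real.Gamma (5/4) / Real.sqrt Real.pi

open MeasureTheory Set

theorem integral_rpow_mul_one_sub_rpow_eq_Gamma {a b : ℝ} (ha : 0 < a) (hb : 0 < b) :
    ∫ t in (0:ℝ)..1, t ^ (a - 1) * (1 - t) ^ (b - 1) = Gamma a * Gamma b / Gamma (a + b) := by
  have hbeta : Complex.betaIntegral a b =
      ((∫ t in (0:ℝ)..1, t ^ (a - 1) * (1 - t) ^ (b - 1) : ℝ) : ℂ) := by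
    rw [Complex.betaIntegral, ← intervalIntegral.integral_ofReal]
    refine intervalIntegral.integral_congr fun t ht => ?_
    rw [uIcc_of_le zero_le_one] at ht
    push_cast
    rw [Complex.ofReal_cpow ht.1, Complex.ofReal_cpow (sub_nonneg.2 ht.2)]
    push_cast
    ring_nf
  have h := Complex.betaIntegral_eq_Gamma_mul_div a b (by simpa) (by simpa)
  rw [hbeta, ← Complex.ofReal_add, Complex.Gamma_ofReal, Complex.Gamma_ofReal,
    Complex.Gamma_ofReal] at h
  exact_mod_cast h

theorem strictMonoOn_pow_four_div_one_add :
    StrictMonoOn (fun s : ℝ => s ^ 4 / (1 + s ^ 4)) (Ici 0) := by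
  intro a ha b _ hab
  have h4 : a ^ 4 < b ^ 4 := pow_lt_pow_left₀ hab ha (by norm_num)
  rw [div_lt_div_iff₀ (by positivity) (by positivity)]
  linarith

theorem image_pow_four_div_one_add_Ioi :
    (fun s : ℝ => s ^ 4 / (1 + s ^ 4)) '' Ioi 0 = Ioo 0 1 := by
  ext y
  constructor
  · rintro ⟨s, hs, rfl⟩
    have hs : 0 < s := hs
    exact ⟨by positivity, (div_lt_one (by positivity)).2 (by linarith)⟩
  · rintro ⟨hy0, hy1⟩
    have hq : 0 < y / (1 - y) := div_pos hy0 (by linarith)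
    refine ⟨(y / (1 - y)) ^ (4⁻¹ : ℝ), rpow_pos_of_pos hq _, ?_⟩
    have h1y : 1 - y ≠ 0 := by linarith
    simp only [← rpow_natCast, ← rpow_mul hq.le, Nat.cast_ofNat,
      inv_mul_cancel₀ (four_ne_zero (α := ℝ)), rpow_one]
    field_simp
    ring

theorem hasDerivAt_pow_four_div_one_add (s : ℝ) :
    HasDerivAt (fun s : ℝ => s ^ 4 / (1 + s ^ 4)) (4 * s ^ 3 / (1 + s ^ 4) ^ 2) s := by
  have h := (hasDerivAt_pow 4 s).div ((hasDerivAt_pow 4 s).const_add 1) (by positivity)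
  exact h.congr_deriv (by push_cast; ring)

theorem beta_quarter_integrand_comp_pow_four_div_one_add {s : ℝ} (hs : 0 < s) :
    |4 * s ^ 3 / (1 + s ^ 4) ^ 2| • ((s ^ 4 / (1 + s ^ 4)) ^ (-(3 / 4) : ℝ) *
      (1 - s ^ 4 / (1 + s ^ 4)) ^ (-(3 / 4) : ℝ)) = 4 * (1 / √(1 + s ^ 4)) := by
  set u := 1 + s ^ 4 with hu
  have hu0 : 0 < u := by positivity
  have h1 : 1 - s ^ 4 / u = u⁻¹ := by field_simp; ring
  have hs4 : (s ^ 4) ^ (-(3 / 4) : ℝ) = (s ^ 3)⁻¹ := by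
    rw [← rpow_natCast, ← rpow_mul hs.le, ← rpow_natCast, ← rpow_neg_one, ← rpow_mul hs.le]
    norm_num
  have hpow : u ^ (3 / 4 : ℝ) * u ^ (3 / 4 : ℝ) * √u = u ^ 2 := by
    rw [sqrt_eq_rpow, ← rpow_add hu0, ← rpow_add hu0, ← rpow_natCast]
    norm_num
  rw [abs_of_pos (by positivity), h1, smul_eq_mul, div_rpow (by positivity) hu0.le, hs4,
    inv_rpow hu0.le, rpow_neg hu0.le, inv_inv]
  clear_value u
  field_simp
  linear_combination hpow

theorem integral_Ioi_inv_sqrt_one_add_pow_four :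
    ∫ s in Ioi (0:ℝ), 1 / √(1 + s ^ 4) = Gamma (1 / 4) ^ 2 / (4 * √π) := by
  have hbeta := integral_rpow_mul_one_sub_rpow_eq_Gamma (a := 1 / 4) (b := 1 / 4)
    (by norm_num) (by norm_num)
  rw [intervalIntegral.integral_of_le zero_le_one, integral_Ioc_eq_integral_Ioo,
    ← image_pow_four_div_one_add_Ioi, show (1 / 4 - 1 : ℝ) = -(3 / 4) by norm_num,
    integral_image_eq_integral_abs_deriv_smul measurableSet_Ioi
      (fun s _ => (hasDerivAt_pow_four_div_one_add s).hasDerivWithinAt)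
      (strictMonoOn_pow_four_div_one_add.injOn.mono Ioi_subset_Ici_self),
    setIntegral_congr_fun measurableSet_Ioi
      (fun s hs => beta_quarter_integrand_comp_pow_four_div_one_add hs),
    integral_const_mul, show (1 / 4 + 1 / 4 : ℝ) = 1 / 2 by norm_num, Gamma_one_half_eq] at hbeta
  linear_combination hbeta / 4

theorem Lval_eq_integral_Ioi : Lval = ∫ s in Ioi (0:ℝ), 1 / √(1 + s ^ 4) := by
  rw [integral_Ioi_inv_sqrt_one_add_pow_four, Lval, show (5 / 4 : ℝ) = 1 / 4 + 1 by norm_num,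
    Gamma_add_one (by norm_num)]
  ring

theorem inv_sqrt_one_add_pow_four_le (t : ℝ) : 1 / √(1 + t ^ 4) ≤ 2 * (1 + t ^ 2)⁻¹ := by
  rw [one_div, inv_le_comm₀ (by positivity) (by positivity), mul_inv, inv_inv,
    inv_mul_le_iff₀ two_pos]
  nlinarith [sq_sqrt (by positivity : 0 ≤ 1 + t ^ 4), sqrt_nonneg (1 + t ^ 4), sq_nonneg (t ^ 2 - 1)]

theorem integrable_inv_sqrt_one_add_pow_four : Integrable fun t : ℝ => 1 / √(1 + t ^ 4) := by
  have hcont : Continuous fun t : ℝ => 1 / √(1 + t ^ 4) :=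
    continuous_const.div (by fun_prop) fun t => by positivity
  refine (integrable_inv_one_add_sq.const_mul 2).mono' hcont.aestronglyMeasurable
    (ae_of_all _ fun t => ?_)
  rw [norm_of_nonneg (by positivity)]
  exact inv_sqrt_one_add_pow_four_le t

theorem Lval_sub_Fint {z : ℝ} (hz : 0 ≤ z) : Lval - Fint z = ∫ t in Ioi z, 1 / √(1 + t ^ 4) := by
  have hf := integrable_inv_sqrt_one_add_pow_four
  rw [Lval_eq_integral_Ioi, Fint, intervalIntegral.integral_of_le hz, ← Ioc_union_Ioi_eq_Ioi hz,
    setIntegral_union (Ioc_disjoint_Ioi le_rfl) measurableSet_Ioi hf.integrableOn hf.integrableOn]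
  ring

theorem one_sub_half_le_inv_sqrt_one_add {x : ℝ} (hx : 0 ≤ x) : 1 - x / 2 ≤ (√(1 + x))⁻¹ := by
  rcases le_or_gt (1 - x / 2) 0 with h | h
  · exact h.trans (by positivity)
  rw [le_inv_comm₀ h (by positivity), sqrt_le_iff]
  refine ⟨by positivity, ?_⟩
  rw [inv_pow, ← one_div, le_div_iff₀ (by positivity)]
  nlinarith [mul_nonneg (sq_nonneg x) h.le]

theorem inv_sqrt_one_add_le {x : ℝ} (hx : 0 ≤ x) : (√(1 + x))⁻¹ ≤ 1 - x / 2 + 3 / 8 * x ^ 2 := by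
  have hp : 0 < 1 - x / 2 + 3 / 8 * x ^ 2 := by nlinarith [sq_nonneg (x - 1)]
  rw [inv_le_comm₀ (by positivity) hp, le_sqrt (by positivity) (by positivity), inv_pow,
    inv_le_iff_one_le_mul₀ (by positivity)]
  nlinarith [sq_nonneg x, mul_nonneg hx (sq_nonneg x), pow_nonneg hx 4, pow_nonneg hx 5]

theorem inv_sqrt_one_add_pow_four_eq {t : ℝ} (ht : 0 < t) :
    1 / √(1 + t ^ 4) = (t ^ 2)⁻¹ * (√(1 + (t ^ 4)⁻¹))⁻¹ := by
  have h : √(1 + t ^ 4) = t ^ 2 * √(1 + (t ^ 4)⁻¹) := by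
    rw [← sqrt_sq (by positivity : 0 ≤ t ^ 2), ← sqrt_mul (by positivity)]
    congr 1
    field_simp
    ring
  rw [h, one_div, mul_inv]

theorem inv_sqrt_one_add_pow_four_bounds {t : ℝ} (ht : 0 < t) :
    (t ^ 2)⁻¹ - (t ^ 6)⁻¹ / 2 ≤ 1 / √(1 + t ^ 4) ∧
    1 / √(1 + t ^ 4) ≤ (t ^ 2)⁻¹ - (t ^ 6)⁻¹ / 2 + 3 / 8 * (t ^ 10)⁻¹ := by
  have hx : 0 ≤ (t ^ 4)⁻¹ := by positivity
  have h6 : (t ^ 6)⁻¹ = (t ^ 2)⁻¹ * (t ^ 4)⁻¹ := by ring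
  have h10 : (t ^ 10)⁻¹ = (t ^ 2)⁻¹ * ((t ^ 4)⁻¹) ^ 2 := by ring
  rw [inv_sqrt_one_add_pow_four_eq ht, h6, h10]
  constructor
  · calc _ = (t ^ 2)⁻¹ * (1 - (t ^ 4)⁻¹ / 2) := by ring
      _ ≤ _ := mul_le_mul_of_nonneg_left (one_sub_half_le_inv_sqrt_one_add hx) (by positivity)
  · calc _ ≤ (t ^ 2)⁻¹ * (1 - (t ^ 4)⁻¹ / 2 + 3 / 8 * ((t ^ 4)⁻¹) ^ 2) :=
          mul_le_mul_of_nonneg_left (inv_sqrt_one_add_le hx) (by positivity)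
      _ = _ := by ring

theorem integrableOn_Ioi_inv_pow {z : ℝ} (hz : 0 < z) {n : ℕ} (hn : 1 < n) :
    IntegrableOn (fun t : ℝ => (t ^ n)⁻¹) (Ioi z) := by
  have h := integrableOn_Ioi_rpow_of_lt (a := -n) (by norm_cast; omega) hz
  simpa [rpow_neg_natCast, zpow_neg] using h

theorem integral_Ioi_inv_pow {z : ℝ} (hz : 0 < z) {n : ℕ} (hn : 1 < n) :
    ∫ t in Ioi z, (t ^ n)⁻¹ = (z ^ (n - 1))⁻¹ / (n - 1 : ℝ) := by
  obtain ⟨m, rfl⟩ : ∃ m, n = m + 1 := ⟨n - 1, by omega⟩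
  have h := integral_Ioi_rpow_of_lt (a := -(m + 1 : ℕ)) (by push_cast; norm_cast; omega) hz
  rw [show (-(m + 1 : ℕ) + 1 : ℝ) = -(m : ℕ) by push_cast; ring] at h
  simp only [rpow_neg_natCast, zpow_neg, zpow_natCast] at h
  rw [h]
  push_cast
  ring

theorem integral_Ioi_inv_sqrt_one_add_pow_four_bounds {z : ℝ} (hz : 0 < z) :
    z⁻¹ - (z ^ 5)⁻¹ / 10 ≤ ∫ t in Ioi z, 1 / √(1 + t ^ 4) ∧
    ∫ t in Ioi z, 1 / √(1 + t ^ 4) ≤ z⁻¹ - (z ^ 5)⁻¹ / 10 + (z ^ 9)⁻¹ / 24 := by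
  have i2 := integrableOn_Ioi_inv_pow hz (n := 2) (by norm_num)
  have i6 := integrableOn_Ioi_inv_pow hz (n := 6) (by norm_num)
  have i10 := integrableOn_Ioi_inv_pow hz (n := 10) (by norm_num)
  have I2 := integral_Ioi_inv_pow hz (n := 2) (by norm_num)
  have I6 := integral_Ioi_inv_pow hz (n := 6) (by norm_num)
  have I10 := integral_Ioi_inv_pow hz (n := 10) (by norm_num)
  norm_num at I2 I6 I10
  have hf := integrable_inv_sqrt_one_add_pow_four.integrableOn (s := Ioi z)
  have hlow : IntegrableOn (fun t : ℝ => (t ^ 2)⁻¹ - (t ^ 6)⁻¹ / 2) (Ioi z) :=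
    i2.sub (i6.div_const 2)
  constructor
  · calc z⁻¹ - (z ^ 5)⁻¹ / 10 = ∫ t in Ioi z, ((t ^ 2)⁻¹ - (t ^ 6)⁻¹ / 2) := by
          rw [integral_sub i2 (i6.div_const 2), integral_div, I2, I6]; ring
      _ ≤ _ := setIntegral_mono_on hlow hf measurableSet_Ioi
          fun t ht => (inv_sqrt_one_add_pow_four_bounds (hz.trans ht)).1
  · calc _ ≤ ∫ t in Ioi z, ((t ^ 2)⁻¹ - (t ^ 6)⁻¹ / 2 + 3 / 8 * (t ^ 10)⁻¹) :=
          setIntegral_mono_on hf (hlow.add (i10.const_mul _)) measurableSet_Ioi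
            fun t ht => (inv_sqrt_one_add_pow_four_bounds (hz.trans ht)).2
      _ = _ := by
          rw [integral_add hlow (i10.const_mul _), integral_sub i2 (i6.div_const 2),
            integral_div, integral_const_mul, I2, I6, I10]
          ring

theorem pow_five_mul_Fint_sub_Lval_add_inv_bounds {z : ℝ} (hz : 0 < z) :
    1 / 10 - (z ^ 4)⁻¹ / 24 ≤ z ^ 5 * (Fint z - Lval + 1 / z) ∧
    z ^ 5 * (Fint z - Lval + 1 / z) ≤ 1 / 10 := by
  have hE : Fint z - Lval + 1 / z = z⁻¹ - ∫ t in Ioi z, 1 / √(1 + t ^ 4) := by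
    rw [← Lval_sub_Fint hz.le]; ring
  obtain ⟨hlow, hup⟩ := integral_Ioi_inv_sqrt_one_add_pow_four_bounds hz
  rw [hE]
  constructor
  · calc 1 / 10 - (z ^ 4)⁻¹ / 24 = z ^ 5 * ((z ^ 5)⁻¹ / 10 - (z ^ 9)⁻¹ / 24) := by field_simp
      _ ≤ _ := mul_le_mul_of_nonneg_left (by linarith) (by positivity)
  · calc _ ≤ z ^ 5 * ((z ^ 5)⁻¹ / 10) := mul_le_mul_of_nonneg_left (by linarith) (by positivity)
      _ = 1 / 10 := by field_simp

/-- `lim_{z→∞} z(L − F(z)) = 1`, and more precisely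
`lim_{z→∞} z⁵(F(z) − L + 1/z) = 1/10`; in particular
`F(z) = L − 1/z + O(z⁻⁵)` as `z → ∞`. -/
theorem Fint_asymptotics :
    Tendsto (fun z : ℝ => z * (Lval - Fint z)) atTop (𝓝 1) ∧
    Tendsto (fun z : ℝ => z ^ 5 * (Fint z - Lval + 1 / z)) atTop (𝓝 (1 / 10)) ∧
    (fun z : ℝ => Fint z - Lval + 1 / z) =O[atTop] (fun z : ℝ => 1 / z ^ 5) := by
  have hinv4 : Tendsto (fun z : ℝ => (z ^ 4)⁻¹) atTop (𝓝 0) :=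
    (tendsto_pow_atTop four_ne_zero).inv_tendsto_atTop
  have hlow : Tendsto (fun z : ℝ => 1 / 10 - (z ^ 4)⁻¹ / 24) atTop (𝓝 (1 / 10)) := by
    simpa using (hinv4.div_const 24).const_sub (1 / 10 : ℝ)
  have hE : Tendsto (fun z : ℝ => z ^ 5 * (Fint z - Lval + 1 / z)) atTop (𝓝 (1 / 10)) :=
    tendsto_of_tendsto_of_tendsto_of_le_of_le' hlow tendsto_const_nhds
      ((eventually_gt_atTop 0).mono fun z hz => (pow_five_mul_Fint_sub_Lval_add_inv_bounds hz).1)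
      ((eventually_gt_atTop 0).mono fun z hz => (pow_five_mul_Fint_sub_Lval_add_inv_bounds hz).2)
  refine ⟨?_, hE, ?_⟩
  · -- `z (L - F z) = 1 - z⁻⁴ · z⁵ (F z - L + 1/z)`
    have h := (hinv4.mul hE).const_sub 1
    rw [zero_mul, sub_zero] at h
    refine h.congr' ((eventually_ne_atTop 0).mono fun z hz => ?_)
    field_simp
    ring
  · refine ((hE.isBigO_one ℝ).mul (isBigO_refl (fun z : ℝ => 1 / z ^ 5) atTop)).congr' ?_ (by simp)
    filter_upwards [eventually_ne_atTop 0] with z hz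
    field_simp
end

section
/- Let c₃ ≥ 0, c₁ ≠ 0, and c_e, c₂ ∈ ℝ. Suppose B: (R₀,∞) → (0,∞) satisfies the algebraic relation B(r)^{4c₃}·((c₃+1)·c_e·r⁻⁴ + c₁·B(r)⁴) = −c₂ for all r > R₀, and B(r) → b₀ > 0 as r → ∞. Then b₀^{4(c₃+1)} = −c₂/c₁, and lim_{r→∞} r⁴·(B(r) − b₀) = −c_e/(4 c₁ b₀³); i.e. B(r) = b₀ + b₄/r⁴ + o(r⁻⁴) with b₄ = −c_e/(4c₁b₀³). -/
/-!
With `p = 4(c₃+1)` the relation reads `c₁ B^p + c₂ = -(c₃+1) c_e B^{4c₃} r⁻⁴`. Letting `r → ∞`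
gives `c₁ b₀^p + c₂ = 0`, and then `r⁴ (c₁ B^p - c₁ b₀^p) → -(c₃+1) c_e b₀^{4c₃}`. Since
`x ↦ c₁ x^p` has the nonzero derivative `c₁ p b₀^{p-1}` at `b₀`, writing
`f (B r) - f b₀ = (B r - b₀) · dslope f b₀ (B r)` transfers this limit to `r⁴ (B r - b₀)`,
divided by that derivative.
-/

open Real Filter Topology Set

section FirstOrderExpansion

variable {α 𝕜 : Type*} [NontriviallyNormedField 𝕜] {l : Filter α}

theorem tendsto_of_tendsto_mul_of_tendsto_ne_zero {u v : α → 𝕜} {a b : 𝕜}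
    (huv : Tendsto (fun x => u x * v x) l (𝓝 a)) (hv : Tendsto v l (𝓝 b)) (hb : b ≠ 0) :
    Tendsto u l (𝓝 (a / b)) := by
  refine (huv.div hv hb).congr' ?_
  filter_upwards [hv.eventually_ne hb] with x hx
  exact mul_div_cancel_right₀ (u x) hx

theorem HasDerivAt.tendsto_mul_sub_of_tendsto_mul_sub_comp {f : 𝕜 → 𝕜} {f' b L : 𝕜}
    (hf : HasDerivAt f f' b) (hf' : f' ≠ 0) {g s : α → 𝕜} (hg : Tendsto g l (𝓝 b))
    (hs : Tendsto (fun x => s x * (f (g x) - f b)) l (𝓝 L)) :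
    Tendsto (fun x => s x * (g x - b)) l (𝓝 (L / f')) := by
  have hslope : Tendsto (fun x => dslope f b (g x)) l (𝓝 f') := by
    have := (continuousAt_dslope_same.mpr hf.differentiableAt).tendsto.comp hg
    rwa [dslope_same, hf.deriv] at this
  refine tendsto_of_tendsto_mul_of_tendsto_ne_zero (hs.congr fun x => ?_) hslope hf'
  rw [← sub_smul_dslope f b (g x), smul_eq_mul, mul_assoc]

end FirstOrderExpansion

theorem B_asymptotic_expansion_general
    (c₃ c₁ c_e c₂ R₀ b₀ : ℝ) (hc₃ : 0 ≤ c₃) (hc₁ : c₁ ≠ 0)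
    (B : ℝ → ℝ)
    (hrel : ∀ r ∈ Ioi R₀,
      B r ^ (4 * c₃) * ((c₃ + 1) * c_e * (r ^ 4)⁻¹ + c₁ * B r ^ 4) = -c₂)
    (hb₀ : 0 < b₀)
    (hlim : Tendsto B atTop (𝓝 b₀)) :
    b₀ ^ (4 * (c₃ + 1)) = -c₂ / c₁ ∧
    Tendsto (fun r : ℝ => r ^ 4 * (B r - b₀)) atTop (𝓝 (-c_e / (4 * c₁ * b₀ ^ 3))) := by
  have hBrpow := hlim.rpow_const (p := 4 * c₃) (Or.inl hb₀.ne')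
  have hrel_p : ∀ᶠ r in atTop,
      c₁ * B r ^ (4 * (c₃ + 1)) + c₂ = -((c₃ + 1) * c_e * B r ^ (4 * c₃)) * (r ^ 4)⁻¹ := by
    filter_upwards [eventually_gt_atTop R₀, hlim.eventually_ne hb₀.ne'] with r hr hBr
    rw [show 4 * (c₃ + 1) = 4 * c₃ + (4 : ℕ) by push_cast; ring, rpow_add_natCast hBr]
    linear_combination hrel r hr
  have hb₀p : c₁ * b₀ ^ (4 * (c₃ + 1)) + c₂ = 0 := by
    refine tendsto_nhds_unique
      (((hlim.rpow_const (Or.inl hb₀.ne')).const_mul c₁).add_const c₂) ?_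
    have := (hBrpow.const_mul ((c₃ + 1) * c_e)).neg.mul
      (tendsto_inv_atTop_zero.comp (tendsto_pow_atTop four_ne_zero))
    rw [mul_zero] at this
    exact this.congr' (hrel_p.mono fun r h => by simp only [Function.comp_apply, h, mul_assoc])
  refine ⟨by rw [eq_div_iff hc₁]; linarith, ?_⟩
  have hderiv := (hasDerivAt_rpow_const (p := 4 * (c₃ + 1)) (Or.inl hb₀.ne')).const_mul c₁
  have hs : Tendsto (fun r => r ^ 4 * (c₁ * B r ^ (4 * (c₃ + 1)) - c₁ * b₀ ^ (4 * (c₃ + 1))))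
      atTop (𝓝 (-((c₃ + 1) * c_e * b₀ ^ (4 * c₃)))) := by
    refine (hBrpow.const_mul ((c₃ + 1) * c_e)).neg.congr' ?_
    filter_upwards [hrel_p, eventually_gt_atTop 0] with r h hr
    rw [show c₁ * b₀ ^ (4 * (c₃ + 1)) = -c₂ by linarith, sub_neg_eq_add, h]
    field_simp
  have hf' : c₁ * (4 * (c₃ + 1) * b₀ ^ (4 * (c₃ + 1) - 1)) ≠ 0 := by
    have := rpow_pos_of_pos hb₀ (4 * (c₃ + 1) - 1)
    positivity
  convert hderiv.tendsto_mul_sub_of_tendsto_mul_sub_comp hf' hlim hs using 2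
  rw [show 4 * (c₃ + 1) - 1 = 4 * c₃ + (3 : ℕ) by push_cast; ring, rpow_add_natCast hb₀.ne']
  have := rpow_pos_of_pos hb₀ (4 * c₃)
  field_simp

/-- Let `c₃ ≥ 0`, `c₁ ≠ 0`. If `B : (R₀,∞) → (0,∞)` satisfies
`B^{4c₃}((c₃+1)c_e r⁻⁴ + c₁B⁴) = −c₂` and `B(r) → b₀ > 0` as `r → ∞`, then
`b₀^{4(c₃+1)} = −c₂/c₁` and `lim_{r→∞} r⁴(B(r) − b₀) = −c_e/(4c₁b₀³)`,
i.e. `B = b₀ + b₄/r⁴ + o(r⁻⁴)` with `b₄ = −c_e/(4c₁b₀³)`. -/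
theorem B_asymptotic_expansion
    (c₃ c₁ c_e c₂ R₀ b₀ : ℝ) (hc₃ : 0 ≤ c₃) (hc₁ : c₁ ≠ 0) (hR₀ : 0 < R₀)
    (B : ℝ → ℝ)
    (hBpos : ∀ r ∈ Ioi R₀, 0 < B r)
    (hrel : ∀ r ∈ Ioi R₀,
      B r ^ (4 * c₃) * ((c₃ + 1) * c_e * (r ^ 4)⁻¹ + c₁ * B r ^ 4) = -c₂)
    (hb₀ : 0 < b₀)
    (hlim : Tendsto B atTop (𝓝 b₀)) :
    b₀ ^ (4 * (c₃ + 1)) = -c₂ / c₁ ∧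
    Tendsto (fun r : ℝ => r ^ 4 * (B r - b₀)) atTop (𝓝 (-c_e / (4 * c₁ * b₀ ^ 3))) :=
  B_asymptotic_expansion_general c₃ c₁ c_e c₂ R₀ b₀ hc₃ hc₁ B hrel hb₀ hlim
end

section
/- Let c_e, c₁ > 0, c₃ ≥ 0, c₀ ∈ ℝ, and let A, B, E, ρ: (R₀,∞) → (0,∞) be differentiable with A'(r)/A(r) = c₀·r·B(r)·E(r) for all r, satisfying c_e·A(r)² = r²E(r)²·((1+c₃)c_e + c₁ r⁴ B(r)⁴) pointwise, with A(r) → a₀ > 0 and B(r) → b₀ > 0 as r → ∞. Then lim_{r→∞} r²·A'(r)/A(r) = c₀·a₀·√(c_e/c₁)/b₀ and lim_{r→∞} r·(a₀/A(r) − 1) = c₀·a₀·√(c_e/c₁)/b₀; i.e. 1/A(r) = (1/a₀)·(1 + 2M/r) + o(1/r) with mass parameter 2M = c₀·a₀·√(c_e/c₁)/b₀, reproducing the linearized Schwarzschild behavior at large r. -/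
open Real Filter Topology Set

/-! The on-shell relation expresses `r³E` through `A` and `B` alone,
`r³E = √(c_e A² / ((1+c₃)c_e/r⁴ + c₁B⁴))`, so `r³E → a₀√(c_e/c₁)/b₀²`, and the equation of motion
`r²A'/A = c₀ B · r³E` gives the first limit. The second follows from the first by l'Hôpital's rule
applied to `(a₀/A − 1)/(1/r)`. -/

lemma cube_mul_eq_sqrt_of_onShell {c_e c₁ c₃ r a b e : ℝ} (hce : 0 < c_e) (hr : 0 < r)
    (ha : 0 < a) (he : 0 ≤ e)
    (hrel : c_e * a ^ 2 = r ^ 2 * e ^ 2 * ((1 + c₃) * c_e + c₁ * r ^ 4 * b ^ 4)) :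
    r ^ 3 * e = √(c_e * a ^ 2 / ((1 + c₃) * c_e / r ^ 4 + c₁ * b ^ 4)) := by
  have hS : 0 < (1 + c₃) * c_e + c₁ * r ^ 4 * b ^ 4 := by
    refine pos_of_mul_pos_right (a := r ^ 2 * e ^ 2) ?_ (by positivity)
    rw [← hrel]
    positivity
  have hscaled : (1 + c₃) * c_e / r ^ 4 + c₁ * b ^ 4
      = ((1 + c₃) * c_e + c₁ * r ^ 4 * b ^ 4) / r ^ 4 := by
    field_simp
  rw [hscaled, eq_comm, sqrt_eq_iff_mul_self_eq (div_nonneg (by positivity) (by positivity))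
    (by positivity), div_div_eq_mul_div, div_eq_iff hS.ne', hrel]
  ring

lemma tendsto_cube_mul_of_onShell {c_e c₁ c₃ a₀ b₀ : ℝ} {A B E : ℝ → ℝ}
    (hce : 0 < c_e) (hc₁ : 0 < c₁) (ha₀ : 0 < a₀) (hb₀ : 0 < b₀)
    (hApos : ∀ᶠ r in atTop, 0 < A r) (hEpos : ∀ᶠ r in atTop, 0 < E r)
    (hrel : ∀ᶠ r in atTop,
      c_e * A r ^ 2 = r ^ 2 * E r ^ 2 * ((1 + c₃) * c_e + c₁ * r ^ 4 * B r ^ 4))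
    (hA : Tendsto A atTop (𝓝 a₀)) (hB : Tendsto B atTop (𝓝 b₀)) :
    Tendsto (fun r => r ^ 3 * E r) atTop (𝓝 (a₀ * √(c_e / c₁) / b₀ ^ 2)) := by
  have hden : Tendsto (fun r : ℝ => (1 + c₃) * c_e / r ^ 4 + c₁ * B r ^ 4) atTop
      (𝓝 (0 + c₁ * b₀ ^ 4)) :=
    (tendsto_const_nhds.div_atTop (tendsto_pow_atTop four_ne_zero)).add
      ((hB.pow 4).const_mul c₁)
  have hsqrt : Tendsto (fun r => √(c_e * A r ^ 2 / ((1 + c₃) * c_e / r ^ 4 + c₁ * B r ^ 4)))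
      atTop (𝓝 √(c_e * a₀ ^ 2 / (0 + c₁ * b₀ ^ 4))) :=
    ((tendsto_const_nhds.mul (hA.pow 2)).div hden (by positivity)).sqrt
  have hlim : √(c_e * a₀ ^ 2 / (0 + c₁ * b₀ ^ 4)) = a₀ * √(c_e / c₁) / b₀ ^ 2 := by
    rw [zero_add, show c_e * a₀ ^ 2 / (c₁ * b₀ ^ 4) = c_e / c₁ * (a₀ / b₀ ^ 2) ^ 2 by ring,
      sqrt_mul (div_pos hce hc₁).le, sqrt_sq (by positivity)]
    ring
  rw [hlim] at hsqrt
  refine hsqrt.congr' ?_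
  filter_upwards [eventually_gt_atTop 0, hApos, hEpos, hrel] with r hr hAr hEr hrelr
  exact (cube_mul_eq_sqrt_of_onShell hce hr hAr hEr.le hrelr).symm

lemma tendsto_mul_div_sub_one_of_tendsto_sq_mul_logDeriv {A : ℝ → ℝ} {a₀ L : ℝ}
    (ha₀ : a₀ ≠ 0) (hA : Tendsto A atTop (𝓝 a₀))
    (hdiff : ∀ᶠ r in atTop, DifferentiableAt ℝ A r)
    (hL : Tendsto (fun r => r ^ 2 * deriv A r / A r) atTop (𝓝 L)) :
    Tendsto (fun r => r * (a₀ / A r - 1)) atTop (𝓝 L) := by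
  have hAne : ∀ᶠ r in atTop, A r ≠ 0 := hA.eventually_ne ha₀
  have hderiv : ∀ᶠ r in atTop,
      HasDerivAt (fun x => a₀ / A x - 1) (-(a₀ * deriv A r) / A r ^ 2) r := by
    filter_upwards [hdiff, hAne] with r hr hAr
    simpa using ((hasDerivAt_const r a₀).div hr.hasDerivAt hAr).sub_const 1
  have hratio : Tendsto (fun r => -(a₀ * deriv A r) / A r ^ 2 / -(r ^ 2)⁻¹) atTop (𝓝 L) := by
    have h : Tendsto (fun r => a₀ / A r * (r ^ 2 * deriv A r / A r)) atTop (𝓝 (a₀ / a₀ * L)) :=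
      (tendsto_const_nhds.div hA ha₀).mul hL
    rw [div_self ha₀, one_mul] at h
    refine h.congr' ?_
    filter_upwards [eventually_ne_atTop 0, hAne] with r hr hAr
    field_simp
  have hinv : ∀ᶠ r : ℝ in atTop, HasDerivAt (fun x => x⁻¹) (-(r ^ 2)⁻¹) r :=
    (eventually_ne_atTop 0).mono fun r hr => hasDerivAt_inv hr
  have hinv_ne : ∀ᶠ r : ℝ in atTop, -(r ^ 2)⁻¹ ≠ 0 :=
    (eventually_ne_atTop 0).mono fun r hr => by simpa using hr
  have hf : Tendsto (fun r => a₀ / A r - 1) atTop (𝓝 0) := by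
    simpa [div_self ha₀] using ((tendsto_const_nhds (x := a₀)).div hA ha₀).sub_const 1
  refine (HasDerivAt.lhopital_zero_atTop hderiv hinv hinv_ne hf tendsto_inv_atTop_zero
    hratio).congr fun r => ?_
  rw [div_inv_eq_mul, mul_comm]

theorem A_asymptotics_Schwarzschild_general
    (c_e c₁ c₃ c₀ R₀ a₀ b₀ : ℝ)
    (hce : 0 < c_e) (hc₁ : 0 < c₁)
    (A B E : ℝ → ℝ)
    (hApos : ∀ r ∈ Ioi R₀, 0 < A r)
    (hEpos : ∀ r ∈ Ioi R₀, 0 < E r)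
    (hAdiff : ∀ r ∈ Ioi R₀, DifferentiableAt ℝ A r)
    (heom : ∀ r ∈ Ioi R₀, deriv A r / A r = c₀ * r * B r * E r)
    (hrel : ∀ r ∈ Ioi R₀,
      c_e * A r ^ 2 = r ^ 2 * E r ^ 2 * ((1 + c₃) * c_e + c₁ * r ^ 4 * B r ^ 4))
    (ha₀ : 0 < a₀) (hb₀ : 0 < b₀)
    (hA : Tendsto A atTop (𝓝 a₀))
    (hB : Tendsto B atTop (𝓝 b₀)) :
    Tendsto (fun r : ℝ => r ^ 2 * deriv A r / A r) atTop
      (𝓝 (c₀ * a₀ * Real.sqrt (c_e / c₁) / b₀)) ∧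
    Tendsto (fun r : ℝ => r * (a₀ / A r - 1)) atTop
      (𝓝 (c₀ * a₀ * Real.sqrt (c_e / c₁) / b₀)) := by
  have hfar := eventually_gt_atTop R₀
  have hE := tendsto_cube_mul_of_onShell hce hc₁ ha₀ hb₀ (hfar.mono hApos) (hfar.mono hEpos)
    (hfar.mono hrel) hA hB
  have hlogDeriv : Tendsto (fun r : ℝ => r ^ 2 * deriv A r / A r) atTop
      (𝓝 (c₀ * a₀ * Real.sqrt (c_e / c₁) / b₀)) := by
    have h := (hB.const_mul c₀).mul hE
    rw [show c₀ * b₀ * (a₀ * √(c_e / c₁) / b₀ ^ 2) = c₀ * a₀ * √(c_e / c₁) / b₀ by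
      field_simp] at h
    refine h.congr' (hfar.mono fun r hr => ?_)
    simp only [mul_div_assoc, heom r hr]
    ring
  exact ⟨hlogDeriv, tendsto_mul_div_sub_one_of_tendsto_sq_mul_logDeriv ha₀.ne' hA
    (hfar.mono hAdiff) hlogDeriv⟩

/-- Let `c_e, c₁ > 0`, `c₃ ≥ 0`, `c₀ ∈ ℝ`. If `A, B, E : (R₀,∞) → (0,∞)` with
`A` differentiable satisfy the equation of motion `A'/A = c₀ r B E` and the on-shell relation
`c_e A² = r²E²((1+c₃)c_e + c₁r⁴B⁴)`, with `A → a₀ > 0` and `B → b₀ > 0` as `r → ∞`, then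
`lim r²A'/A = c₀a₀√(c_e/c₁)/b₀` and `lim r(a₀/A − 1) = c₀a₀√(c_e/c₁)/b₀`;
i.e. `1/A = (1/a₀)(1 + 2M/r) + o(1/r)` with `2M = c₀a₀√(c_e/c₁)/b₀`, reproducing the
linearized Schwarzschild behavior at large `r`. -/
theorem A_asymptotics_Schwarzschild
    (c_e c₁ c₃ c₀ R₀ a₀ b₀ : ℝ)
    (hce : 0 < c_e) (hc₁ : 0 < c₁) (hc₃ : 0 ≤ c₃) (hR₀ : 0 < R₀)
    (A B E : ℝ → ℝ)
    (hApos : ∀ r ∈ Ioi R₀, 0 < A r)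
    (hBpos : ∀ r ∈ Ioi R₀, 0 < B r)
    (hEpos : ∀ r ∈ Ioi R₀, 0 < E r)
    (hAdiff : ∀ r ∈ Ioi R₀, DifferentiableAt ℝ A r)
    (heom : ∀ r ∈ Ioi R₀, deriv A r / A r = c₀ * r * B r * E r)
    (hrel : ∀ r ∈ Ioi R₀,
      c_e * A r ^ 2 = r ^ 2 * E r ^ 2 * ((1 + c₃) * c_e + c₁ * r ^ 4 * B r ^ 4))
    (ha₀ : 0 < a₀) (hb₀ : 0 < b₀)
    (hA : Tendsto A atTop (𝓝 a₀))
    (hB : Tendsto B atTop (𝓝 b₀)) :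
    Tendsto (fun r : ℝ => r ^ 2 * deriv A r / A r) atTop
      (𝓝 (c₀ * a₀ * Real.sqrt (c_e / c₁) / b₀)) ∧
    Tendsto (fun r : ℝ => r * (a₀ / A r - 1)) atTop
      (𝓝 (c₀ * a₀ * Real.sqrt (c_e / c₁) / b₀)) :=
  A_asymptotics_Schwarzschild_general c_e c₁ c₃ c₀ R₀ a₀ b₀ hce hc₁ A B E hApos hEpos hAdiff heom
    hrel ha₀ hb₀ hA hB
end

section
/- Let B: I → (0,∞) and S: I → ℝ be differentiable functions on an open interval I ⊆ (0,∞) satisfying r⁴·B'(r) + (d/dr)(r⁶·S(r)²/B(r)) = 0 and (d/dr)(r³·S(r)/B(r)) = 0 on I. Then B is constant on I and r ↦ r³·S(r) is constant on I; i.e. B = b₀ and S = s₀/r³ for constants b₀ > 0 and s₀ ∈ ℝ. -/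
/-! The axion condition says that `g := r³S/B` is constant, and `r⁶S²/B = g²B`, so the equation of
motion reduces to `(r⁴ + g²) B' = 0`. As `r > 0` this forces `B' = 0`; then `B` and `g` are
constant on the interval, hence so is `r³S = g B`. -/

open Real Set

/-- Also true where `B s = 0`, as both sides are then `0` by the convention `x / 0 = 0`. -/
theorem pow_six_mul_sq_div_eq_sq_div_mul (B S : ℝ → ℝ) :
    (fun s => s ^ 6 * S s ^ 2 / B s) = fun s => (s ^ 3 * S s / B s) ^ 2 * B s := by
  funext s
  by_cases hB : B s = 0
  · simp [hB]
  · field_simp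

theorem deriv_sq_mul_of_deriv_eq_zero {𝕜 : Type*} [NontriviallyNormedField 𝕜] {g B : 𝕜 → 𝕜}
    {x : 𝕜} (hg : DifferentiableAt 𝕜 g x) (hB : DifferentiableAt 𝕜 B x) (hg' : deriv g x = 0) :
    deriv (fun s => g s ^ 2 * B s) x = g x ^ 2 * deriv B x := by
  rw [deriv_fun_mul (c := fun s => g s ^ 2) (hg.pow 2) hB, deriv_fun_pow hg, hg']
  ring

theorem deriv_eq_zero_of_eom_of_axion {B S : ℝ → ℝ} {r : ℝ} (hr : r ≠ 0)
    (hB : DifferentiableAt ℝ B r) (hg : DifferentiableAt ℝ (fun s => s ^ 3 * S s / B s) r)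
    (heom : r ^ 4 * deriv B r + deriv (fun s => s ^ 6 * S s ^ 2 / B s) r = 0)
    (haxion : deriv (fun s => s ^ 3 * S s / B s) r = 0) :
    deriv B r = 0 := by
  rw [pow_six_mul_sq_div_eq_sq_div_mul, deriv_sq_mul_of_deriv_eq_zero hg hB haxion,
    ← add_mul] at heom
  exact (mul_eq_zero.mp heom).resolve_left (by positivity)

theorem exists_const_on_Ioo_of_deriv_eq_zero {a b : ℝ} {f : ℝ → ℝ}
    (hf : ∀ x ∈ Ioo a b, DifferentiableAt ℝ f x) (hf' : ∀ x ∈ Ioo a b, deriv f x = 0) :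
    ∃ c, ∀ x ∈ Ioo a b, f x = c :=
  isOpen_Ioo.exists_is_const_of_deriv_eq_zero isPreconnected_Ioo
    (fun x hx => (hf x hx).differentiableWithinAt) hf'

/-- If `B : (a,b) → (0,∞)` and `S : (a,b) → ℝ` (with `(a,b) ⊆ (0,∞)`) are
differentiable and satisfy `r⁴B' + (r⁶S²/B)' = 0` and `(r³S/B)' = 0`, then `B` is constant and
`r ↦ r³S(r)` is constant on `(a,b)`; i.e. `B = b₀` and `S = s₀/r³` with `b₀ > 0`. -/
theorem E_zero_branch_B_S
    (a b : ℝ) (ha : 0 ≤ a)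
    (B S : ℝ → ℝ)
    (hBpos : ∀ r ∈ Ioo a b, 0 < B r)
    (hBdiff : ∀ r ∈ Ioo a b, DifferentiableAt ℝ B r)
    (hSdiff : ∀ r ∈ Ioo a b, DifferentiableAt ℝ S r)
    (heom : ∀ r ∈ Ioo a b,
      r ^ 4 * deriv B r + deriv (fun s => s ^ 6 * S s ^ 2 / B s) r = 0)
    (haxion : ∀ r ∈ Ioo a b,
      deriv (fun s => s ^ 3 * S s / B s) r = 0) :
    ∃ b₀ : ℝ, 0 < b₀ ∧ ∃ s₀ : ℝ, ∀ r ∈ Ioo a b, B r = b₀ ∧ r ^ 3 * S r = s₀ := by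
  rcases (Ioo a b).eq_empty_or_nonempty with hempty | ⟨r₀, hr₀⟩
  · exact ⟨1, one_pos, 0, by simp [hempty]⟩
  set g := fun s => s ^ 3 * S s / B s
  have hgdiff : ∀ r ∈ Ioo a b, DifferentiableAt ℝ g r := fun r hr =>
    ((differentiableAt_id.pow 3).mul (hSdiff r hr)).div (hBdiff r hr) (hBpos r hr).ne'
  have hB' : ∀ r ∈ Ioo a b, deriv B r = 0 := fun r hr =>
    deriv_eq_zero_of_eom_of_axion (ha.trans_lt hr.1).ne' (hBdiff r hr) (hgdiff r hr)
      (heom r hr) (haxion r hr)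
  obtain ⟨b₀, hb₀⟩ := exists_const_on_Ioo_of_deriv_eq_zero hBdiff hB'
  obtain ⟨g₀, hg₀⟩ := exists_const_on_Ioo_of_deriv_eq_zero hgdiff haxion
  refine ⟨b₀, hb₀ r₀ hr₀ ▸ hBpos r₀ hr₀, g₀ * b₀, fun r hr => ⟨hb₀ r hr, ?_⟩⟩
  rw [← hg₀ r hr, ← hb₀ r hr, div_mul_cancel₀ _ (hBpos r hr).ne']
end

section
/- Let b₀ > 0 and s₀ ∈ ℝ be constants and let A, ρ: I → (0,∞) be differentiable on an open interval I ⊆ (0,∞) satisfying the divergence constraint (A(r)ρ(r)²)'/(A(r)ρ(r)²) = 2s₀²/(r⁵b₀² + r·s₀²) on I. Then the function r ↦ A(r)·ρ(r)²·√(b₀² + s₀²·r⁻⁴) is constant on I; i.e. ρ² = (1/A)·c̃_ρ/√(b₀² + s₀² r⁻⁴) for a constant c̃_ρ. -/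
open Real Set

/-!
Writing `g = A ρ²` and `q(r) = b₀² + s₀² r⁻⁴`, one has `q' = -4 s₀² r⁻⁵`, so the right-hand side
of the constraint is `-q' / (2q)`. The constraint therefore says `2 q g' + g q' = 0`, which is
exactly the vanishing of `(g √q)' = (2 q g' + g q') / (2 √q)`; on the connected interval the
product `g √q` is constant.
-/

lemma hasDerivAt_of_deriv_div_eq_s14 {g : ℝ → ℝ} {r k : ℝ} (hg : DifferentiableAt ℝ g r)
    (hg0 : g r ≠ 0) (h : deriv g r / g r = k) : HasDerivAt g (g r * k) r := by
  rw [← h, mul_div_cancel₀ _ hg0]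
  exact hg.hasDerivAt

lemma HasDerivAt.mul_sqrt_zero {g q : ℝ → ℝ} {g' q' r : ℝ} (hg : HasDerivAt g g' r)
    (hq : HasDerivAt q q' r) (hq0 : 0 < q r) (hlog : 2 * q r * g' + g r * q' = 0) :
    HasDerivAt (fun s => g s * √(q s)) 0 r := by
  refine (hg.mul (hq.sqrt hq0.ne')).congr_deriv ?_
  have hsq : √(q r) ^ 2 = q r := sq_sqrt hq0.le
  have hs : √(q r) ≠ 0 := (sqrt_pos.mpr hq0).ne'
  field_simp
  linear_combination hlog + 2 * g' * hsq

lemma hasDerivAt_const_add_mul_inv_pow_four (b s r : ℝ) (hr : r ≠ 0) :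
    HasDerivAt (fun x : ℝ => b + s * (x ^ 4)⁻¹) (-(4 * s) / r ^ 5) r := by
  refine ((((hasDerivAt_pow 4 r).fun_inv (pow_ne_zero 4 hr)).const_mul s).const_add b).congr_deriv
    ?_
  field_simp
  ring

lemma two_mul_mul_constraint_rhs_add_deriv_eq_zero (b₀ s₀ : ℝ) {r : ℝ} (hr : 0 < r)
    (hb₀ : b₀ ≠ 0) :
    2 * (b₀ ^ 2 + s₀ ^ 2 * (r ^ 4)⁻¹) * (2 * s₀ ^ 2 / (r ^ 5 * b₀ ^ 2 + r * s₀ ^ 2))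
      + (-(4 * s₀ ^ 2) / r ^ 5) = 0 := by
  have hden : r ^ 5 * b₀ ^ 2 + r * s₀ ^ 2 ≠ 0 := by positivity
  have hr0 : r ≠ 0 := hr.ne'
  field_simp
  ring

/-- Let `b₀ > 0`, `s₀ ∈ ℝ`, and `A, ρ : (a,b) → (0,∞)` (with
`(a,b) ⊆ (0,∞)`) differentiable, satisfying the divergence constraint
`(Aρ²)'/(Aρ²) = 2s₀²/(r⁵b₀² + r s₀²)`. Then `r ↦ A·ρ²·√(b₀² + s₀²r⁻⁴)` is constant on
`(a,b)`; i.e. `ρ² = (1/A)·c̃_ρ/√(b₀² + s₀²r⁻⁴)` for a constant `c̃_ρ`. -/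
theorem E_zero_branch_dilaton
    (a b b₀ s₀ : ℝ) (ha : 0 ≤ a) (hb₀ : 0 < b₀)
    (A ρ : ℝ → ℝ)
    (hApos : ∀ r ∈ Ioo a b, 0 < A r)
    (hρpos : ∀ r ∈ Ioo a b, 0 < ρ r)
    (hAdiff : ∀ r ∈ Ioo a b, DifferentiableAt ℝ A r)
    (hρdiff : ∀ r ∈ Ioo a b, DifferentiableAt ℝ ρ r)
    (hconstr : ∀ r ∈ Ioo a b,
      deriv (fun s => A s * ρ s ^ 2) r / (A r * ρ r ^ 2)
        = 2 * s₀ ^ 2 / (r ^ 5 * b₀ ^ 2 + r * s₀ ^ 2)) :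
    ∃ c : ℝ, ∀ r ∈ Ioo a b,
      A r * ρ r ^ 2 * Real.sqrt (b₀ ^ 2 + s₀ ^ 2 * (r ^ 4)⁻¹) = c := by
  have hderiv : ∀ r ∈ Ioo a b,
      HasDerivAt (fun s => A s * ρ s ^ 2 * √(b₀ ^ 2 + s₀ ^ 2 * (s ^ 4)⁻¹)) 0 r := by
    intro r hr
    have hr0 : 0 < r := ha.trans_lt hr.1
    have hg : HasDerivAt (fun s => A s * ρ s ^ 2) _ r :=
      hasDerivAt_of_deriv_div_eq_s14 ((hAdiff r hr).mul ((hρdiff r hr).pow 2))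
        (mul_pos (hApos r hr) (pow_pos (hρpos r hr) 2)).ne' (hconstr r hr)
    refine hg.mul_sqrt_zero (hasDerivAt_const_add_mul_inv_pow_four _ _ r hr0.ne')
      (by positivity) ?_
    linear_combination
      A r * ρ r ^ 2 * two_mul_mul_constraint_rhs_add_deriv_eq_zero b₀ s₀ hr0 hb₀.ne'
  exact isOpen_Ioo.exists_is_const_of_deriv_eq_zero isPreconnected_Ioo
    (fun r hr => (hderiv r hr).differentiableAt.differentiableWithinAt)
    (fun r hr => (hderiv r hr).deriv)
end

section
/- Let b₀ > 0 and s₀ ∈ ℝ be constants and let A: I → (0,∞) be twice differentiable on an open interval I ⊆ (0,∞) satisfying A''(r)/A(r) = 2·(A'(r)/A(r))² − (2b₀²r³/(b₀²r⁴ + s₀²))·(A'(r)/A(r)) on I. Then the function r ↦ √(b₀²r⁴ + s₀²)·A'(r)/A(r)² is constant on I; equivalently, (1/A)'(r) = c_{a1}/√(b₀²r⁴ + s₀²) for some constant c_{a1}. -/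
open Real Set

/-! Writing `Q r = b₀² r⁴ + s₀²`, one has `(√Q)' = 2 b₀² r³ / √Q`, so the equation of motion,
solved for `A''`, makes the derivative of `√Q · A' / A²` vanish identically:
`(√Q A'/A²)' = (2b₀²r³/√Q) A'/A² + √Q (A''/A² − 2A'²/A³) = 0`.
A function with zero derivative on an interval is constant, and `(1/A)' = −A'/A²`. -/

lemma hasDerivAt_sqrt_quartic {b₀ s₀ x : ℝ} (hQ : b₀ ^ 2 * x ^ 4 + s₀ ^ 2 ≠ 0) :
    HasDerivAt (fun r => √(b₀ ^ 2 * r ^ 4 + s₀ ^ 2))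
      (2 * b₀ ^ 2 * x ^ 3 / √(b₀ ^ 2 * x ^ 4 + s₀ ^ 2)) x := by
  have hpoly : HasDerivAt (fun r => b₀ ^ 2 * r ^ 4 + s₀ ^ 2) (b₀ ^ 2 * (4 * x ^ 3)) x := by
    simpa using ((hasDerivAt_pow 4 x).const_mul (b₀ ^ 2)).add_const (s₀ ^ 2)
  convert hpoly.sqrt hQ using 1
  ring

lemma hasDerivAt_sqrt_quartic_mul_div_sq_eq_zero {b₀ s₀ x A'' : ℝ} {A A' : ℝ → ℝ}
    (hQ : 0 < b₀ ^ 2 * x ^ 4 + s₀ ^ 2) (hA : 0 < A x)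
    (hA' : HasDerivAt A (A' x) x) (hA'' : HasDerivAt A' A'' x)
    (heom : A'' / A x = 2 * (A' x / A x) ^ 2
      - 2 * b₀ ^ 2 * x ^ 3 / (b₀ ^ 2 * x ^ 4 + s₀ ^ 2) * (A' x / A x)) :
    HasDerivAt (fun r => √(b₀ ^ 2 * r ^ 4 + s₀ ^ 2) * A' r / A r ^ 2) 0 x := by
  have hsqrt := Real.sqrt_pos.mpr hQ
  have hsq : √(b₀ ^ 2 * x ^ 4 + s₀ ^ 2) ^ 2 = b₀ ^ 2 * x ^ 4 + s₀ ^ 2 := Real.sq_sqrt hQ.le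
  have hA''_eq : A'' = 2 * A' x ^ 2 / A x
      - 2 * b₀ ^ 2 * x ^ 3 / (b₀ ^ 2 * x ^ 4 + s₀ ^ 2) * A' x := by
    rw [div_eq_iff hA.ne'] at heom
    rw [heom]
    field_simp
  refine (((hasDerivAt_sqrt_quartic hQ.ne').fun_mul hA'').fun_div (hA'.fun_pow 2)
    (by positivity)).congr_deriv ?_
  rw [hA''_eq]
  field_simp
  rw [hsq]
  ring

/-- Let `b₀ > 0`, `s₀ ∈ ℝ`, and `A : (a,b) → (0,∞)` (with `(a,b) ⊆ (0,∞)`)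
twice differentiable, satisfying
`A''/A = 2(A'/A)² − (2b₀²r³/(b₀²r⁴+s₀²))·(A'/A)`.
Then `r ↦ √(b₀²r⁴ + s₀²)·A'/A²` is constant on `(a,b)`; equivalently,
`(1/A)' = c_{a1}/√(b₀²r⁴ + s₀²)` for some constant `c_{a1}`. -/
theorem E_zero_branch_A_equation
    (a b b₀ s₀ : ℝ) (ha : 0 ≤ a) (hb₀ : 0 < b₀)
    (A : ℝ → ℝ)
    (hApos : ∀ r ∈ Ioo a b, 0 < A r)
    (hAdiff : ∀ r ∈ Ioo a b, DifferentiableAt ℝ A r)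
    (hAdiff2 : ∀ r ∈ Ioo a b, DifferentiableAt ℝ (deriv A) r)
    (heom : ∀ r ∈ Ioo a b,
      deriv (deriv A) r / A r
        = 2 * (deriv A r / A r) ^ 2
          - 2 * b₀ ^ 2 * r ^ 3 / (b₀ ^ 2 * r ^ 4 + s₀ ^ 2) * (deriv A r / A r)) :
    ∃ c : ℝ,
      (∀ r ∈ Ioo a b,
        Real.sqrt (b₀ ^ 2 * r ^ 4 + s₀ ^ 2) * deriv A r / A r ^ 2 = c) ∧
      (∀ r ∈ Ioo a b,
        deriv (fun s => 1 / A s) r = -c / Real.sqrt (b₀ ^ 2 * r ^ 4 + s₀ ^ 2)) := by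
  have hQ : ∀ r ∈ Ioo a b, 0 < b₀ ^ 2 * r ^ 4 + s₀ ^ 2 := fun r hr => by
    have hr0 : 0 < r := ha.trans_lt hr.1
    positivity
  have hF : ∀ r ∈ Ioo a b,
      HasDerivAt (fun r => √(b₀ ^ 2 * r ^ 4 + s₀ ^ 2) * deriv A r / A r ^ 2) 0 r :=
    fun r hr => hasDerivAt_sqrt_quartic_mul_div_sq_eq_zero (hQ r hr) (hApos r hr)
      (hAdiff r hr).hasDerivAt (hAdiff2 r hr).hasDerivAt (heom r hr)
  obtain ⟨c, hc⟩ := isOpen_Ioo.exists_is_const_of_deriv_eq_zero isPreconnected_Ioo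
    (fun r hr => (hF r hr).differentiableAt.differentiableWithinAt) (fun r hr => (hF r hr).deriv)
  refine ⟨c, hc, fun r hr => ?_⟩
  have hsqrt := Real.sqrt_pos.mpr (hQ r hr)
  rw [((hasDerivAt_const r 1).fun_div (hAdiff r hr).hasDerivAt (hApos r hr).ne').deriv, ← hc r hr]
  field_simp
  ring
end

section
/- For all real constants b > 0 and s > 0, the improper integral ∫₀^∞ dr/√(b²r⁴ + s²) converges and equals Γ(1/4)·Γ(5/4)/√(π·b·s), where Γ is the Gamma function. -/
/-!
Scaling `r = √(s/b) x` reduces the integral to `(b s)^{-1/2} ∫₀^∞ (1 + x⁴)^{-1/2} dx`. The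
substitution `u = x⁴` followed by `u = t / (1 - t)` turns the latter into the Euler integral
`B(1/4, 1/4) / 4 = Γ(1/4)² / (4 √π)`, and `Γ(1/4) / 4 = Γ(5/4)`. None of these changes of variables
needs integrability, so convergence follows from the value being nonzero.
-/

open Real MeasureTheory Set

theorem integral_Ioo_rpow_mul_one_sub_rpow_eq_beta {a b : ℝ} (ha : 0 < a) (hb : 0 < b) :
    ∫ t in Ioo (0:ℝ) 1, t ^ (a - 1) * (1 - t) ^ (b - 1) = ProbabilityTheory.beta a b := by
  rw [ProbabilityTheory.beta_eq_betaIntegralReal a b ha hb, Complex.betaIntegral,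
    intervalIntegral.integral_of_le zero_le_one, ← integral_Ioc_eq_integral_Ioo,
    ← RCLike.re_to_complex, ← integral_re]
  · refine setIntegral_congr_fun measurableSet_Ioc fun t ⟨ht0, ht1⟩ ↦ ?_
    have h₁ := Complex.ofReal_cpow ht0.le (a - 1)
    have h₂ := Complex.ofReal_cpow (sub_nonneg.2 ht1) (b - 1)
    push_cast at h₁ h₂
    rw [RCLike.re_to_complex, ← h₁, ← h₂]
    norm_cast
  · exact (intervalIntegrable_iff_integrableOn_Ioc_of_le zero_le_one).mp
      (Complex.betaIntegral_convergent (by simpa) (by simpa))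

theorem bijOn_div_one_sub_Ioo_Ioi :
    BijOn (fun t : ℝ ↦ t / (1 - t)) (Ioo 0 1) (Ioi 0) := by
  refine InvOn.bijOn (f' := fun x ↦ x / (1 + x)) ⟨fun t ht ↦ ?_, fun x (hx : 0 < x) ↦ ?_⟩
    (fun t ht ↦ div_pos ht.1 (sub_pos.2 ht.2)) (fun x (hx : 0 < x) ↦ ⟨?_, ?_⟩)
  · have : 1 - t ≠ 0 := (sub_pos.2 ht.2).ne'
    field_simp; ring
  · have : 1 + x ≠ 0 := by positivity
    field_simp; ring
  · positivity
  · exact (div_lt_one (by positivity)).2 (by linarith)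

theorem integral_Ioi_rpow_mul_one_add_rpow_s16 (a b : ℝ) :
    ∫ x in Ioi (0:ℝ), x ^ (a - 1) * (1 + x) ^ (-(a + b))
      = ∫ t in Ioo (0:ℝ) 1, t ^ (a - 1) * (1 - t) ^ (b - 1) := by
  have hderiv (t : ℝ) (ht : t ∈ Ioo (0:ℝ) 1) :
      HasDerivWithinAt (fun t : ℝ ↦ t / (1 - t)) ((1 - t) ^ 2)⁻¹ (Ioo 0 1) t :=
    ((hasDerivAt_id t).div ((hasDerivAt_const t 1).sub (hasDerivAt_id t))
      (sub_pos.2 ht.2).ne').hasDerivWithinAt.congr_deriv (by simp)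
  rw [← bijOn_div_one_sub_Ioo_Ioi.image_eq,
    integral_image_eq_integral_abs_deriv_smul measurableSet_Ioo hderiv
      bijOn_div_one_sub_Ioo_Ioi.injOn]
  refine setIntegral_congr_fun measurableSet_Ioo fun t ⟨ht0, ht1⟩ ↦ ?_
  have hu : 0 < 1 - t := sub_pos.2 ht1
  have hsum : 1 + t / (1 - t) = (1 - t)⁻¹ := by field_simp; ring
  have hsplit : (1 - t) ^ (a + b) = (1 - t) ^ (a - 1) * (1 - t) ^ (b - 1) * (1 - t) ^ 2 := by
    rw [← rpow_add hu, ← rpow_two, ← rpow_add hu]; ring_nf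
  rw [smul_eq_mul, abs_of_pos (by positivity), hsum, div_rpow ht0.le hu.le, inv_rpow hu.le,
    rpow_neg hu.le, inv_inv, hsplit]
  field_simp

theorem integral_Ioi_one_add_rpow_rpow_neg_s16 {p q : ℝ} (hp : 0 < p) (hpq : p⁻¹ < q) :
    ∫ x in Ioi (0:ℝ), (1 + x ^ p) ^ (-q) = ProbabilityTheory.beta p⁻¹ (q - p⁻¹) / p := by
  have hsubst := integral_comp_rpow_Ioi_of_pos
    (g := fun y ↦ p⁻¹ * (y ^ (p⁻¹ - 1) * (1 + y) ^ (-(p⁻¹ + (q - p⁻¹))))) hp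
  rw [integral_const_mul, integral_Ioi_rpow_mul_one_add_rpow_s16,
    integral_Ioo_rpow_mul_one_sub_rpow_eq_beta (inv_pos.2 hp) (sub_pos.2 hpq)] at hsubst
  rw [div_eq_inv_mul, ← hsubst]
  refine setIntegral_congr_fun measurableSet_Ioi fun x (hx : 0 < x) ↦ ?_
  have hjacobian : p * x ^ (p - 1) * (p⁻¹ * (x ^ p) ^ (p⁻¹ - 1)) = 1 := by
    rw [← rpow_mul hx.le, mul_mul_mul_comm, mul_inv_cancel₀ hp.ne', ← rpow_add hx, mul_sub,
      mul_inv_cancel₀ hp.ne']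
    simp
  rw [smul_eq_mul, add_sub_cancel, ← mul_assoc p⁻¹, ← mul_assoc, hjacobian, one_mul]

theorem integral_Ioi_one_div_sqrt_one_add_pow_four :
    ∫ x in Ioi (0:ℝ), 1 / √(1 + x ^ 4) = Gamma (1/4) * Gamma (5/4) / √π := by
  have hbeta := integral_Ioi_one_add_rpow_rpow_neg_s16 (p := 4) (q := 1/2) (by norm_num) (by norm_num)
  have hintegrand (x : ℝ) : (1 + x ^ (4:ℝ)) ^ (-(1/2 : ℝ)) = 1 / √(1 + x ^ 4) := by
    rw [rpow_ofNat, rpow_neg (by positivity : (0:ℝ) ≤ 1 + x ^ 4), ← sqrt_eq_rpow, one_div]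
  have hGamma : Gamma (5/4) = Gamma (1/4) / 4 := by
    rw [show (5/4 : ℝ) = 1/4 + 1 by norm_num, Gamma_add_one (by norm_num)]
    ring
  simp only [hintegrand] at hbeta
  rw [hbeta, ProbabilityTheory.beta, hGamma]
  norm_num [Gamma_one_half_eq]
  ring

theorem integral_Ioi_one_div_sqrt_quartic_eq {b s : ℝ} (hb : 0 < b) (hs : 0 < s) :
    ∫ r in Ioi (0:ℝ), 1 / √(b ^ 2 * r ^ 4 + s ^ 2)
      = (∫ x in Ioi (0:ℝ), 1 / √(1 + x ^ 4)) / √(b * s) := by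
  set k := √(b / s)
  have hk : 0 < k := sqrt_pos.2 (div_pos hb hs)
  have hsk : s * k = √(b * s) := by
    rw [show b * s = s ^ 2 * (b / s) by field_simp, sqrt_mul (sq_nonneg s), sqrt_sq hs.le]
  have hk4 : k ^ 4 = (b / s) ^ 2 := by
    rw [show k ^ 4 = (k ^ 2) ^ 2 by ring, sq_sqrt (div_pos hb hs).le]
  have hpoint (r : ℝ) : 1 / √(b ^ 2 * r ^ 4 + s ^ 2) = s⁻¹ * (1 / √(1 + (k * r) ^ 4)) := by
    have : b ^ 2 * r ^ 4 + s ^ 2 = s ^ 2 * (1 + (k * r) ^ 4) := by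
      rw [mul_pow, hk4]
      field_simp
      ring
    rw [this, sqrt_mul (sq_nonneg s), sqrt_sq hs.le, one_div, mul_inv, one_div]
  simp_rw [hpoint]
  rw [integral_const_mul, integral_comp_mul_left_Ioi (fun x ↦ 1 / √(1 + x ^ 4)) 0 hk, mul_zero,
    smul_eq_mul, ← hsk]
  field_simp

/-- For all `b > 0` and `s > 0`, the improper integral
`∫₀^∞ dr/√(b²r⁴ + s²)` converges and equals `Γ(1/4)·Γ(5/4)/√(π b s)`. -/
theorem integral_one_div_sqrt_quartic :
    ∀ b s : ℝ, 0 < b → 0 < s →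
      IntegrableOn (fun r : ℝ => 1 / Real.sqrt (b ^ 2 * r ^ 4 + s ^ 2)) (Ioi 0) ∧
      ∫ r in Ioi (0:ℝ), 1 / Real.sqrt (b ^ 2 * r ^ 4 + s ^ 2)
        = Real.Gamma (1/4) * Real.Gamma (5/4) / Real.sqrt (Real.pi * b * s) := by
  intro b s hb hs
  have hvalue : ∫ r in Ioi (0:ℝ), 1 / √(b ^ 2 * r ^ 4 + s ^ 2)
      = Gamma (1/4) * Gamma (5/4) / √(π * b * s) := by
    rw [integral_Ioi_one_div_sqrt_quartic_eq hb hs, integral_Ioi_one_div_sqrt_one_add_pow_four,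
      mul_assoc, sqrt_mul pi_pos.le, div_div]
  refine ⟨Integrable.of_integral_ne_zero ?_, hvalue⟩
  rw [hvalue]
  positivity
end

section
/- Let U ⊆ ℝ⁴ be open, let E: U → ℝ^{4×4} be a C¹ matrix-valued map with E(x) invertible for every x ∈ U (components E_α^μ, frame index α, coordinate index μ), let Θ(x) := E(x)^{−1} (components Θ^α_μ), and let ρ_M: U → (0,∞) be C¹. Suppose the divergence constraint Σ_μ ∂_μ(ρ_M·E_α^μ) = 0 holds on U for every α. Define the Weitzenböck torsion T^α_{μν} := ∂_μ Θ^α_ν − ∂_ν Θ^α_μ. Then for every x ∈ U and every index μ: Σ_{α,σ} E_α^σ(x)·T^α_{σμ}(x) = ∂_μ log(ρ_M(x)·|det E(x)|). -/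
/-!
Differentiating `E⁻¹ E = 1` turns each half of the torsion trace into a contraction of `E⁻¹`
with derivatives of `E`. In `∑ E_α^σ ∂_μ Θ^α_σ` this contraction is `tr (E⁻¹ ∂_μ E)`, which
by Jacobi's formula is `∂_μ log |det E|`. In `∑ E_α^σ ∂_σ Θ^α_μ` it involves the divergence
`∂_σ E_α^σ`, which the constraint `∂_σ (ρ_M E_α^σ) = 0` replaces by `-ρ_M⁻¹ E_α^σ ∂_σ ρ_M`,
leaving `∂_μ log ρ_M`.
-/

open Real Set

/-- The partial derivative `∂_μ f x` of a scalar function on `ℝ⁴`. -/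
noncomputable def pd (μ : Fin 4) (f : (Fin 4 → ℝ) → ℝ) (x : Fin 4 → ℝ) : ℝ :=
  fderiv ℝ f x (Pi.single μ 1)

/-- The Weitzenböck torsion `T^α_{μν} = ∂_μ Θ^α_ν − ∂_ν Θ^α_μ` of the coframe
`Θ(x) = E(x)⁻¹` (components `Θ^α_μ = (E x)⁻¹ μ α`). -/
noncomputable def torsion (E : (Fin 4 → ℝ) → Matrix (Fin 4) (Fin 4) ℝ)
    (α μ ν : Fin 4) (x : Fin 4 → ℝ) : ℝ :=
  pd μ (fun y => (E y)⁻¹ ν α) x - pd ν (fun y => (E y)⁻¹ μ α) x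

namespace Matrix

variable {ι : Type*} [Fintype ι] [DecidableEq ι]

theorem norm_det_le_factorial_mul_prod_norm_row {R : Type*} [NormedCommRing R] [NormOneClass R]
    (M : Matrix ι ι R) : ‖M.det‖ ≤ (Fintype.card ι).factorial * ∏ i, ‖M i‖ := by
  calc ‖M.det‖ ≤ ∑ σ : Equiv.Perm ι, ‖Equiv.Perm.sign σ • ∏ i, M (σ i) i‖ := by
        rw [det_apply]; exact norm_sum_le _ _
    _ ≤ ∑ _σ : Equiv.Perm ι, ∏ i, ‖M i‖ := by
        refine Finset.sum_le_sum fun σ _ => ?_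
        rw [norm_units_zsmul, ← Equiv.prod_comp σ (fun i => ‖M i‖)]
        refine (Finset.norm_prod_le _ _).trans ?_
        exact Finset.prod_le_prod (fun _ _ => norm_nonneg _) fun i _ => norm_le_pi_norm _ _
    _ = (Fintype.card ι).factorial * ∏ i, ‖M i‖ := by
        rw [Finset.sum_const, Finset.card_univ, Fintype.card_perm, nsmul_eq_mul]

theorem det_updateRow_eq_sum_adjugate_mul {R : Type*} [CommRing R] (A : Matrix ι ι R) (i : ι)
    (b : ι → R) : (A.updateRow i b).det = ∑ j, A.adjugate j i * b j := by
  rw [← det_transpose, ← updateCol_transpose, ← cramer_apply, cramer_eq_adjugate_mulVec,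
    ← adjugate_transpose, mulVec, dotProduct]
  simp [mul_comm]

variable {𝕜 : Type*} [NontriviallyNormedField 𝕜]

noncomputable def detRowContinuousMultilinear :
    ContinuousMultilinearMap 𝕜 (fun _ : ι => ι → 𝕜) 𝕜 :=
  (detRowAlternating : (ι → 𝕜) [⋀^ι]→ₗ[𝕜] 𝕜).toMultilinearMap.mkContinuous _
    fun M => norm_det_le_factorial_mul_prod_norm_row (Matrix.of M)

@[simp]
theorem detRowContinuousMultilinear_apply (M : Matrix ι ι 𝕜) :
    detRowContinuousMultilinear M = M.det := rfl

end Matrix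

section Jacobi

open Matrix

variable {𝕜 : Type*} [NontriviallyNormedField 𝕜] {ι : Type*} [Fintype ι] [DecidableEq ι]
  {V : Type*} [NormedAddCommGroup V] [NormedSpace 𝕜 V] {F : V → Matrix ι ι 𝕜} {x : V}

theorem HasFDerivAt.matrix_det {F' : ι → ι → V →L[𝕜] 𝕜}
    (hF : ∀ i j, HasFDerivAt (fun y => F y i j) (F' i j) x) :
    HasFDerivAt (fun y => (F y).det) (∑ i, ∑ j, (F x).adjugate j i • F' i j) x := by
  have hrows : ∀ i, HasFDerivAt (fun y => F y i) (ContinuousLinearMap.pi (F' i)) x :=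
    fun i => hasFDerivAt_pi.2 (hF i)
  refine (HasFDerivAt.multilinear_comp (f := detRowContinuousMultilinear) hrows).congr_fderiv ?_
  ext v
  simp only [_root_.sum_apply, ContinuousLinearMap.comp_apply, ContinuousLinearMap.coe_pi',
    ContinuousMultilinearMap.toContinuousLinearMap_apply, _root_.smul_apply, smul_eq_mul]
  exact Finset.sum_congr rfl fun i _ => det_updateRow_eq_sum_adjugate_mul (F x) i _

theorem DifferentiableAt.matrix_det (hF : ∀ i j, DifferentiableAt 𝕜 (fun y => F y i j) x) :
    DifferentiableAt 𝕜 (fun y => (F y).det) x :=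
  (HasFDerivAt.matrix_det fun i j => (hF i j).hasFDerivAt).differentiableAt

theorem DifferentiableAt.matrix_adjugate_apply
    (hF : ∀ i j, DifferentiableAt 𝕜 (fun y => F y i j) x) (i j : ι) :
    DifferentiableAt 𝕜 (fun y => (F y).adjugate i j) x := by
  simp only [adjugate_apply]
  refine DifferentiableAt.matrix_det fun k l => ?_
  simp only [updateRow_apply]
  split_ifs
  · exact differentiableAt_const _
  · exact hF k l

theorem DifferentiableAt.matrix_inv_apply
    (hF : ∀ i j, DifferentiableAt 𝕜 (fun y => F y i j) x) (hdet : (F x).det ≠ 0) (i j : ι) :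
    DifferentiableAt 𝕜 (fun y => (F y)⁻¹ i j) x := by
  simp only [inv_def, Ring.inverse_eq_inv', Matrix.smul_apply, smul_eq_mul]
  exact ((DifferentiableAt.matrix_det hF).inv hdet).mul (.matrix_adjugate_apply hF i j)

open Filter Topology in
theorem sum_mul_fderiv_inv_apply_eq_neg
    (hF : ∀ i j, DifferentiableAt 𝕜 (fun y => F y i j) x) (hdet : ∀ᶠ y in 𝓝 x, (F y).det ≠ 0)
    (p q : ι) (v : V) :
    ∑ k, F x k q * fderiv 𝕜 (fun y => (F y)⁻¹ p k) x v
      = -∑ k, (F x)⁻¹ p k * fderiv 𝕜 (fun y => F y k q) x v := by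
  have hprod : HasFDerivAt (fun y => ∑ k, (F y)⁻¹ p k * F y k q)
      (∑ k, ((F x)⁻¹ p k • fderiv 𝕜 (fun y => F y k q) x
        + F x k q • fderiv 𝕜 (fun y => (F y)⁻¹ p k) x)) x :=
    HasFDerivAt.fun_sum fun k _ =>
      (DifferentiableAt.matrix_inv_apply hF hdet.self_of_nhds p k).hasFDerivAt.mul
        (hF k q).hasFDerivAt
  have hconst :
      (fun y => ∑ k, (F y)⁻¹ p k * F y k q) =ᶠ[𝓝 x] fun _ => (1 : Matrix ι ι 𝕜) p q := by
    filter_upwards [hdet] with y hy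
    rw [← mul_apply, nonsing_inv_mul _ (Ne.isUnit hy)]
  have hzero := congrArg (· v) ((hprod.congr_of_eventuallyEq hconst.symm).unique
    (hasFDerivAt_const _ _))
  simp only [_root_.sum_apply, _root_.add_apply, _root_.smul_apply, smul_eq_mul,
    Finset.sum_add_distrib, _root_.zero_apply] at hzero
  linear_combination hzero

end Jacobi

theorem HasFDerivAt.log_det {ι : Type*} [Fintype ι] [DecidableEq ι]
    {V : Type*} [NormedAddCommGroup V] [NormedSpace ℝ V] {F : V → Matrix ι ι ℝ} {x : V}
    {F' : ι → ι → V →L[ℝ] ℝ} (hF : ∀ i j, HasFDerivAt (fun y => F y i j) (F' i j) x)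
    (hdet : (F x).det ≠ 0) :
    HasFDerivAt (fun y => Real.log (F y).det) (∑ i, ∑ j, (F x)⁻¹ j i • F' i j) x := by
  convert (HasFDerivAt.matrix_det hF).log hdet using 1
  simp only [Finset.smul_sum, smul_smul, Matrix.inv_def, Ring.inverse_eq_inv', Matrix.smul_apply,
    smul_eq_mul]

section Dilaton

open Filter Topology

variable {x : Fin 4 → ℝ}

theorem pd_mul {f g : (Fin 4 → ℝ) → ℝ} (hf : DifferentiableAt ℝ f x)
    (hg : DifferentiableAt ℝ g x) (μ : Fin 4) :
    pd μ (fun y => f y * g y) x = f x * pd μ g x + pd μ f x * g x := by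
  simp only [pd, fderiv_fun_mul hf hg, add_apply, smul_apply, smul_eq_mul]
  ring

theorem pd_log_mul_abs {f g : (Fin 4 → ℝ) → ℝ} (hf : DifferentiableAt ℝ f x)
    (hg : DifferentiableAt ℝ g x) (hfx : f x ≠ 0) (hgx : g x ≠ 0) (μ : Fin 4) :
    pd μ (fun y => log (f y * |g y|)) x
      = pd μ (fun y => log (f y)) x + pd μ (fun y => log (g y)) x := by
  have hsplit : (fun y => log (f y * |g y|)) =ᶠ[𝓝 x] fun y => log (f y) + log (g y) := by
    filter_upwards [hf.continuousAt.eventually_ne hfx, hg.continuousAt.eventually_ne hgx]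
      with y hfy hgy
    rw [log_mul hfy (abs_ne_zero.2 hgy), log_abs]
  simp only [pd, hsplit.fderiv_eq, fderiv_fun_add (hf.log hfx) (hg.log hgx), add_apply]

theorem sum_pd_eq_of_sum_pd_mul_eq_zero {f : (Fin 4 → ℝ) → ℝ} {g : Fin 4 → (Fin 4 → ℝ) → ℝ}
    (hf : DifferentiableAt ℝ f x) (hg : ∀ σ, DifferentiableAt ℝ (g σ) x) (hfx : f x ≠ 0)
    (hdiv : ∑ σ, pd σ (fun y => f y * g σ y) x = 0) :
    ∑ σ, pd σ (g σ) x = -(f x)⁻¹ * ∑ σ, pd σ f x * g σ x := by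
  simp only [pd_mul hf (hg _), Finset.sum_add_distrib, ← Finset.mul_sum] at hdiv
  field_simp
  linear_combination hdiv

variable {E : (Fin 4 → ℝ) → Matrix (Fin 4) (Fin 4) ℝ}

theorem sum_mul_pd_inv_eq_pd_log_of_divergence_free {ρ : (Fin 4 → ℝ) → ℝ}
    (hE : ∀ α ν, DifferentiableAt ℝ (fun y => E y α ν) x) (hdet : ∀ᶠ y in 𝓝 x, (E y).det ≠ 0)
    (hρ : DifferentiableAt ℝ ρ x) (hρx : ρ x ≠ 0)
    (hdiv : ∀ α, ∑ σ, pd σ (fun y => ρ y * E y α σ) x = 0) (μ : Fin 4) :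
    ∑ α, ∑ σ, E x α σ * pd σ (fun y => (E y)⁻¹ μ α) x = pd μ (fun y => log (ρ y)) x := by
  have hdivE : ∀ α, ∑ σ, pd σ (fun y => E y α σ) x = -(ρ x)⁻¹ * ∑ σ, pd σ ρ x * E x α σ :=
    fun α => sum_pd_eq_of_sum_pd_mul_eq_zero hρ (hE α) hρx (hdiv α)
  calc ∑ α, ∑ σ, E x α σ * pd σ (fun y => (E y)⁻¹ μ α) x
      = -∑ α, (E x)⁻¹ μ α * ∑ σ, pd σ (fun y => E y α σ) x := by
        rw [Finset.sum_comm]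
        simp only [pd, sum_mul_fderiv_inv_apply_eq_neg hE hdet, Finset.sum_neg_distrib,
          Finset.mul_sum]
        rw [Finset.sum_comm]
    _ = (ρ x)⁻¹ * ∑ σ, pd σ ρ x * ((E x)⁻¹ * E x) μ σ := by
        simp only [hdivE, Matrix.mul_apply, Finset.mul_sum]
        rw [Finset.sum_comm, ← Finset.sum_neg_distrib]
        refine Finset.sum_congr rfl fun σ _ => ?_
        rw [← Finset.sum_neg_distrib]
        exact Finset.sum_congr rfl fun α _ => by ring
    _ = pd μ (fun y => log (ρ y)) x := by
        rw [Matrix.nonsing_inv_mul _ hdet.self_of_nhds.isUnit]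
        simp [pd, fderiv.log hρ hρx, Matrix.one_apply]

theorem sum_mul_pd_inv_eq_neg_pd_log_det
    (hE : ∀ α ν, DifferentiableAt ℝ (fun y => E y α ν) x) (hdet : ∀ᶠ y in 𝓝 x, (E y).det ≠ 0)
    (μ : Fin 4) :
    ∑ α, ∑ σ, E x α σ * pd μ (fun y => (E y)⁻¹ σ α) x = -pd μ (fun y => log (E y).det) x := by
  rw [pd, (HasFDerivAt.log_det (fun i j => (hE i j).hasFDerivAt) hdet.self_of_nhds).fderiv,
    Finset.sum_comm]
  simp only [pd, sum_mul_fderiv_inv_apply_eq_neg hE hdet, _root_.sum_apply, _root_.smul_apply,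
    smul_eq_mul, Finset.sum_neg_distrib]
  rw [Finset.sum_comm]

end Dilaton

/-- Let `U ⊆ ℝ⁴` be open, `E : U → ℝ^{4×4}` a C¹ invertible frame
(components `E_α^μ = E x α μ`), and `ρ_M : U → (0,∞)` C¹. If the divergence constraint
`∑_μ ∂_μ(ρ_M E_α^μ) = 0` holds on `U` for every `α`, then for all `x ∈ U` and every `μ`:
`∑_{α,σ} E_α^σ T^α_{σμ} = ∂_μ log(ρ_M·|det E|)`, i.e. the trace of the Weitzenböck torsion
is the gradient of the logarithm of the dilaton factor. -/
theorem torsion_trace_dilaton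
    (U : Set (Fin 4 → ℝ)) (hU : IsOpen U)
    (E : (Fin 4 → ℝ) → Matrix (Fin 4) (Fin 4) ℝ)
    (ρM : (Fin 4 → ℝ) → ℝ)
    (hE : ∀ α μ : Fin 4, ContDiffOn ℝ 1 (fun y => E y α μ) U)
    (hEinv : ∀ x ∈ U, (E x).det ≠ 0)
    (hρM : ContDiffOn ℝ 1 ρM U)
    (hρMpos : ∀ x ∈ U, 0 < ρM x)
    (hdiv : ∀ α : Fin 4, ∀ x ∈ U,
      ∑ μ : Fin 4, fderiv ℝ (fun y => ρM y * E y α μ) x (Pi.single μ 1) = 0) :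
    ∀ x ∈ U, ∀ μ : Fin 4,
      ∑ α : Fin 4, ∑ σ : Fin 4, E x α σ * torsion E α σ μ x
        = pd μ (fun y => Real.log (ρM y * |(E y).det|)) x := by
  intro x hx μ
  have hUx : U ∈ nhds x := hU.mem_nhds hx
  have dE : ∀ α ν, DifferentiableAt ℝ (fun y => E y α ν) x := fun α ν =>
    ((hE α ν).differentiableOn_one).differentiableAt hUx
  have dρ : DifferentiableAt ℝ ρM x := (hρM.differentiableOn_one).differentiableAt hUx
  have hdet : ∀ᶠ y in nhds x, (E y).det ≠ 0 := Filter.eventually_of_mem hUx hEinv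
  simp only [torsion, mul_sub, Finset.sum_sub_distrib]
  rw [sum_mul_pd_inv_eq_pd_log_of_divergence_free dE hdet dρ (hρMpos x hx).ne'
      (fun α => hdiv α x hx), sum_mul_pd_inv_eq_neg_pd_log_det dE hdet,
    pd_log_mul_abs dρ (.matrix_det dE) (hρMpos x hx).ne' (hEinv x hx), sub_neg_eq_add]
end

section
/- Fix R > 0. Let η = diag(−1,1,1,1) be the Minkowski metric on ℝ⁴, write x_μ = η_{μν}x^ν, and let U := {x ∈ ℝ⁴ : (x⁰)² − (x¹)² − (x²)² − (x³)² > R²}. Define s(x) := √((x⁰)² − (x¹)² − (x²)² − (x³)² − R²)/R (so s > 0 on U), let V⁰,…,V³: U → ℝ be C¹, and define the lift V⁴ := −(Σ_μ x_μ V^μ)/(R·s). Let D := Σ_σ x^σ ∂_σ denote the radial derivative. Then for every x ∈ U the identity Σ_μ ∂_μ V^μ + R⁻²·Σ_μ x_μ·(D V^μ) + (s/R)·(D V⁴) = s·Σ_μ ∂_μ(V^μ/s) holds. In particular, the lifted vector field (V^μ, V⁴) is divergence-free on the hyperboloid, i.e. the left-hand side vanishes, if and only if Σ_μ ∂_μ(s⁻¹·V^μ)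 = 0. -/
/-!
Write `N = ∑ x_μ V^μ`, so that `V⁴ = -N/(R s)`. Since `R² s² = quad x - R²` and
`quad x = -∑ x_μ x^μ`, the scale factor has gradient `∂_σ s = -x_σ/(R² s)`, hence radial
derivative `D s = quad/(R² s) = (s² + 1)/s`; and `D N = N + ∑ x_μ D V^μ` because each `x_μ` is
linear. The quotient rule for `D V⁴` then collapses the left-hand side to
`∑ ∂_μ V^μ + N/(R s)²`, and the quotient rule for `s ∑ ∂_μ (V^μ/s)` gives the same expression.
-/

open Real Set

/-- The radial derivative `D f = ∑_σ x^σ ∂_σ f`. -/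
noncomputable def Dop (f : (Fin 4 → ℝ) → ℝ) (x : Fin 4 → ℝ) : ℝ :=
  ∑ σ : Fin 4, x σ * pd σ f x

/-- Lowered index: `x_μ = η_{μν}x^ν` with `η = diag(−1,1,1,1)`. -/
def low (x : Fin 4 → ℝ) (μ : Fin 4) : ℝ := if μ = 0 then -x 0 else x μ

/-- The Minkowski quadratic form `(x⁰)² − (x¹)² − (x²)² − (x³)²`. -/
def quad (x : Fin 4 → ℝ) : ℝ := x 0 ^ 2 - x 1 ^ 2 - x 2 ^ 2 - x 3 ^ 2

/-- `U = {x ∈ ℝ⁴ : (x⁰)² − (x¹)² − (x²)² − (x³)² > R²}`. -/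
def Ureg (R : ℝ) : Set (Fin 4 → ℝ) := {x | R ^ 2 < quad x}

/-- The cosmic scale factor `s(x) = √(quad x − R²)/R = sinh(η)`. -/
noncomputable def scl (R : ℝ) (x : Fin 4 → ℝ) : ℝ := Real.sqrt (quad x - R ^ 2) / R

/-- The lift `V⁴ = −(∑_μ x_μ V^μ)/(R s)` of a vector field on `M^{3,1}` to the
hyperboloid `H⁴`. -/
noncomputable def lift4 (R : ℝ) (V : Fin 4 → (Fin 4 → ℝ) → ℝ) (x : Fin 4 → ℝ) : ℝ :=
  -(∑ μ : Fin 4, low x μ * V μ x) / (R * scl R x)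

lemma Dop_eq_fderiv_apply (f : (Fin 4 → ℝ) → ℝ) (x : Fin 4 → ℝ) :
    Dop f x = fderiv ℝ f x x := by
  calc Dop f x = fderiv ℝ f x (∑ σ, x σ • Pi.single σ 1) := by simp [Dop, pd, map_sum]
    _ = fderiv ℝ f x x := by rw [← pi_eq_sum_univ']

lemma fderiv_div_apply {𝕜 E : Type*} [NontriviallyNormedField 𝕜] [NormedAddCommGroup E]
    [NormedSpace 𝕜 E] {f g : E → 𝕜} {x : E} (hf : DifferentiableAt 𝕜 f x)
    (hg : DifferentiableAt 𝕜 g x) (hgx : g x ≠ 0) (v : E) :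
    fderiv 𝕜 (fun y => f y / g y) x v
      = (fderiv 𝕜 f x v * g x - f x * fderiv 𝕜 g x v) / g x ^ 2 := by
  have hinv : HasFDerivAt (fun y => (g y)⁻¹) (-(g x ^ 2)⁻¹ • fderiv 𝕜 g x) x :=
    (hasDerivAt_inv hgx).comp_hasFDerivAt x hg.hasFDerivAt
  simp only [div_eq_mul_inv]
  rw [(hf.hasFDerivAt.fun_mul hinv).fderiv]
  simp only [add_apply, smul_apply, smul_eq_mul]
  field_simp
  ring

lemma pd_div {f g : (Fin 4 → ℝ) → ℝ} {x : Fin 4 → ℝ} (μ : Fin 4)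
    (hf : DifferentiableAt ℝ f x) (hg : DifferentiableAt ℝ g x) (hgx : g x ≠ 0) :
    pd μ (fun y => f y / g y) x = (pd μ f x * g x - f x * pd μ g x) / g x ^ 2 :=
  fderiv_div_apply hf hg hgx _

lemma Dop_div {f g : (Fin 4 → ℝ) → ℝ} {x : Fin 4 → ℝ}
    (hf : DifferentiableAt ℝ f x) (hg : DifferentiableAt ℝ g x) (hgx : g x ≠ 0) :
    Dop (fun y => f y / g y) x = (Dop f x * g x - f x * Dop g x) / g x ^ 2 := by
  simp only [Dop_eq_fderiv_apply]
  exact fderiv_div_apply hf hg hgx _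

lemma low_eq (x : Fin 4 → ℝ) (μ : Fin 4) : low x μ = (if μ = 0 then -1 else 1) * x μ := by
  split_ifs with h <;> simp [low, h]

@[fun_prop]
lemma differentiable_low (μ : Fin 4) : Differentiable ℝ (fun y : Fin 4 → ℝ => low y μ) := by
  simp_rw [low_eq]; fun_prop

lemma fderiv_low_apply (μ : Fin 4) (x v : Fin 4 → ℝ) :
    fderiv ℝ (fun y => low y μ) x v = low v μ := by
  rw [funext fun y => low_eq y μ, fderiv_const_mul (differentiableAt_apply μ x),
    (hasFDerivAt_apply μ x).fderiv, low_eq]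
  rfl

lemma sum_low_mul_self (x : Fin 4 → ℝ) : ∑ μ, low x μ * x μ = -quad x := by
  simp [Fin.sum_univ_four, low, quad]; ring

@[fun_prop]
lemma differentiable_quad : Differentiable ℝ quad := by
  unfold quad; fun_prop

lemma fderiv_quad_apply (x v : Fin 4 → ℝ) :
    fderiv ℝ quad x v = -2 * ∑ μ, low x μ * v μ := by
  have hsq (i : Fin 4) := (hasFDerivAt_apply (𝕜 := ℝ) (F' := fun _ => ℝ) i x).pow 2
  have h : HasFDerivAt quad _ x := (((hsq 0).fun_sub (hsq 1)).fun_sub (hsq 2)).fun_sub (hsq 3)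
  rw [h.fderiv]
  simp only [sub_apply, smul_apply, ContinuousLinearMap.proj_apply, smul_eq_mul, low,
    Fin.sum_univ_four, ↓reduceIte, Fin.reduceEq, nsmul_eq_mul]
  ring

lemma isOpen_Ureg (R : ℝ) : IsOpen (Ureg R) :=
  isOpen_lt continuous_const differentiable_quad.continuous

lemma scl_pos {R : ℝ} (hR : 0 < R) {x : Fin 4 → ℝ} (hx : x ∈ Ureg R) : 0 < scl R x :=
  div_pos (Real.sqrt_pos.mpr (sub_pos.mpr hx)) hR

lemma sqrt_quad_sub_sq {R : ℝ} (hR : R ≠ 0) {x : Fin 4 → ℝ} :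
    Real.sqrt (quad x - R ^ 2) = R * scl R x := by
  rw [scl]; field_simp

lemma quad_eq_of_mem_Ureg {R : ℝ} (hR : 0 < R) {x : Fin 4 → ℝ} (hx : x ∈ Ureg R) :
    quad x = (R * scl R x) ^ 2 + R ^ 2 := by
  rw [← sqrt_quad_sub_sq hR.ne', Real.sq_sqrt (sub_pos.mpr hx).le]; ring

lemma differentiableAt_scl {R : ℝ} {x : Fin 4 → ℝ} (hx : x ∈ Ureg R) :
    DifferentiableAt ℝ (scl R) x := by
  unfold scl
  fun_prop (disch := exact (sub_pos.mpr hx).ne')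

lemma fderiv_scl_apply {R : ℝ} (hR : 0 < R) {x : Fin 4 → ℝ} (hx : x ∈ Ureg R) (v : Fin 4 → ℝ) :
    fderiv ℝ (scl R) x v = -(∑ μ, low x μ * v μ) / (R ^ 2 * scl R x) := by
  have hs := scl_pos hR hx
  have h := (((differentiable_quad x).hasFDerivAt.sub_const (R ^ 2)).sqrt
    (sub_pos.mpr hx).ne').const_mul R⁻¹
  rw [show scl R = fun y => R⁻¹ * Real.sqrt (quad y - R ^ 2) from
    funext fun y => div_eq_inv_mul _ _, h.fderiv]
  simp only [smul_apply, smul_eq_mul, fderiv_quad_apply, sqrt_quad_sub_sq hR.ne']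
  field_simp

lemma pd_scl {R : ℝ} (hR : 0 < R) {x : Fin 4 → ℝ} (hx : x ∈ Ureg R) (σ : Fin 4) :
    pd σ (scl R) x = -low x σ / (R ^ 2 * scl R x) := by
  simp [pd, fderiv_scl_apply hR hx, Pi.single_apply]

lemma Dop_scl {R : ℝ} (hR : 0 < R) {x : Fin 4 → ℝ} (hx : x ∈ Ureg R) :
    Dop (scl R) x = quad x / (R ^ 2 * scl R x) := by
  rw [Dop_eq_fderiv_apply, fderiv_scl_apply hR hx, sum_low_mul_self, neg_neg]

lemma Dop_sum_low_mul {V : Fin 4 → (Fin 4 → ℝ) → ℝ} {x : Fin 4 → ℝ}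
    (hV : ∀ μ, DifferentiableAt ℝ (V μ) x) :
    Dop (fun y => ∑ μ, low y μ * V μ y) x
      = ∑ μ, low x μ * V μ x + ∑ μ, low x μ * Dop (V μ) x := by
  rw [Dop_eq_fderiv_apply,
    fderiv_fun_sum fun μ _ => (differentiable_low μ x).fun_mul (hV μ)]
  simp only [fderiv_fun_mul (differentiable_low _ x) (hV _), sum_apply, add_apply, smul_apply,
    smul_eq_mul, fderiv_low_apply, Dop_eq_fderiv_apply]
  rw [← Finset.sum_add_distrib]
  exact Finset.sum_congr rfl fun μ _ => by ring

lemma scl_div_mul_Dop_lift4 {R : ℝ} (hR : 0 < R) {V : Fin 4 → (Fin 4 → ℝ) → ℝ}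
    {x : Fin 4 → ℝ} (hx : x ∈ Ureg R) (hV : ∀ μ, DifferentiableAt ℝ (V μ) x) :
    scl R x / R * Dop (lift4 R V) x
      = (∑ μ, low x μ * V μ x) / (R * scl R x) ^ 2
        - (R ^ 2)⁻¹ * ∑ μ, low x μ * Dop (V μ) x := by
  have hs := scl_pos hR hx
  have hN : DifferentiableAt ℝ (fun y => -∑ μ, low y μ * V μ y) x := by
    fun_prop
  have hRs : DifferentiableAt ℝ (fun y => R * scl R y) x :=
    (differentiableAt_scl hx).const_mul R
  rw [show lift4 R V = fun y => (-∑ μ, low y μ * V μ y) / (R * scl R y) from rfl,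
    Dop_div hN hRs (by positivity)]
  simp only [Dop_eq_fderiv_apply, fderiv_fun_neg, fderiv_const_mul (differentiableAt_scl hx),
    neg_apply, smul_apply, smul_eq_mul]
  simp only [← Dop_eq_fderiv_apply]
  rw [Dop_sum_low_mul hV, Dop_scl hR hx, quad_eq_of_mem_Ureg hR hx]
  field_simp
  ring

lemma scl_mul_sum_pd_div_scl {R : ℝ} (hR : 0 < R) {V : Fin 4 → (Fin 4 → ℝ) → ℝ}
    {x : Fin 4 → ℝ} (hx : x ∈ Ureg R) (hV : ∀ μ, DifferentiableAt ℝ (V μ) x) :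
    scl R x * ∑ μ, pd μ (fun y => V μ y / scl R y) x
      = ∑ μ, pd μ (V μ) x + (∑ μ, low x μ * V μ x) / (R * scl R x) ^ 2 := by
  have hs := scl_pos hR hx
  simp only [pd_div _ (hV _) (differentiableAt_scl hx) hs.ne', pd_scl hR hx]
  rw [Finset.mul_sum, Finset.sum_div, ← Finset.sum_add_distrib]
  refine Finset.sum_congr rfl fun μ _ => ?_
  field_simp
  ring

/-- Fix `R > 0`. For C¹ vector-field components `V⁰,…,V³` on
`U = {quad x > R²}`, with lift `V⁴ = −(∑ x_μ V^μ)/(Rs)`, the tangential divergence on the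
hyperboloid satisfies the identity
`∑_μ ∂_μ V^μ + R⁻² ∑_μ x_μ (D V^μ) + (s/R)(D V⁴) = s·∑_μ ∂_μ(V^μ/s)` on `U`;
in particular the lift is divergence-free on `H⁴` iff `∑_μ ∂_μ(s⁻¹V^μ) = 0`. -/
theorem hyperboloid_divergence_identity
    (R : ℝ) (hR : 0 < R)
    (V : Fin 4 → (Fin 4 → ℝ) → ℝ)
    (hV : ∀ μ : Fin 4, ContDiffOn ℝ 1 (V μ) (Ureg R)) :
    ∀ x ∈ Ureg R,
      ((∑ μ : Fin 4, pd μ (V μ) x)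
          + (R ^ 2)⁻¹ * ∑ μ : Fin 4, low x μ * Dop (V μ) x
          + scl R x / R * Dop (lift4 R V) x
        = scl R x * ∑ μ : Fin 4, pd μ (fun y => V μ y / scl R y) x) ∧
      (((∑ μ : Fin 4, pd μ (V μ) x)
          + (R ^ 2)⁻¹ * ∑ μ : Fin 4, low x μ * Dop (V μ) x
          + scl R x / R * Dop (lift4 R V) x = 0)
        ↔ ∑ μ : Fin 4, pd μ (fun y => (scl R y)⁻¹ * V μ y) x = 0) := by
  intro x hx
  have hVx : ∀ μ, DifferentiableAt ℝ (V μ) x := fun μ =>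
    ((hV μ).differentiableOn one_ne_zero).differentiableAt ((isOpen_Ureg R).mem_nhds hx)
  refine (fun hdiv => ⟨hdiv, ?_⟩) ?_
  · rw [add_assoc, scl_div_mul_Dop_lift4 hR hx hVx, scl_mul_sum_pd_div_scl hR hx hVx]
    ring
  · simp_rw [hdiv, inv_mul_eq_div, mul_eq_zero, (scl_pos hR hx).ne', false_or]
end
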